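/- arXiv:1502.02520 — 4 statements merged into one kernel-verified Lean document; each statement's English description precedes it below -/
import Mathlib

section
/- Let M be a connected cycle-free partial order and let r ∈ M be a point fixed by every automorphism of M. Then the relation ≤_T of the T(M) construction is a partial order on the underlying set of M, r ≤_T s holds for every s ∈ M, and ⟨M, ≤_T⟩ is a tree: every two elements have a common lower bound and, for every t, the set {s : s ≤_T t} is linearly ordered by ≤_T. -/
open Set FirstOrder

universe u v

/-! ## Dedekind–MacNeille completion, connecting sets, paths, CFPOs -/

/-- The Dedekind–MacNeille completion of a partial order `M`, realized as the
collection of subsets `A ⊆ M` with `A = lowerBounds (upperBounds A)`, ordered by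
inclusion (inherited from `Set M`). -/
abbrev DMcut (M : Type*) [PartialOrder M] : Type _ :=
  {A : Set M // lowerBounds (upperBounds A) = A}

/-- The canonical embedding of `M` into its Dedekind–MacNeille completion,
`a ↦ {x | x ≤ a}`. -/
def toDM {M : Type*} [PartialOrder M] (a : M) : DMcut M :=
  ⟨{x | x ≤ a}, by
    apply subset_antisymm
    · intro z hz
      exact hz fun x hx => hx
    · intro z hz y hy
      exact le_trans hz (hy (le_refl a))⟩

/-- `c 0, …, c (n-1)` is a connecting set from `a` to `b` (0-indexed version of
Warren's definition). -/
structure IsConnSet {M : Type*} [PartialOrder M] (a b : M) (n : ℕ) (c : ℕ → DMcut M) : Prop where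
  two_le : 2 ≤ n
  first : c 0 = toDM a
  last : c (n - 1) = toDM b
  comp : ∀ i, i < n - 1 → c i ≤ c (i + 1) ∨ c (i + 1) ≤ c i
  alt : ∀ i, 0 < i → i < n - 1 →
    (c (i - 1) < c i ∧ c (i + 1) < c i) ∨ (c i < c (i - 1) ∧ c i < c (i + 1))

/-- The closed order-interval between two (comparable) points of the completion. -/
def betweenSet {M : Type*} [PartialOrder M] (x y : DMcut M) : Set (DMcut M) :=
  {z | (x ≤ z ∧ z ≤ y) ∨ (y ≤ z ∧ z ≤ x)}

/-- `σ` is a maximal chain of the subset `S`. -/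
def IsMaxChainIn {α : Type*} [Preorder α] (S σ : Set α) : Prop :=
  σ ⊆ S ∧ IsChain (· ≤ ·) σ ∧
    ∀ σ' : Set α, σ' ⊆ S → IsChain (· ≤ ·) σ' → σ ⊆ σ' → σ' = σ

/-- `P` is a path from `a` to `b` in `M` (computed in the Dedekind–MacNeille
completion of `M`). -/
def IsPath {M : Type*} [PartialOrder M] (a b : M) (P : Set (DMcut M)) : Prop :=
  ∃ (n : ℕ) (c : ℕ → DMcut M) (σ : ℕ → Set (DMcut M)),
    IsConnSet a b n c ∧
    (∀ k, k < n - 1 →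
      IsMaxChainIn (betweenSet (c k) (c (k + 1))) (σ k) ∧ c k ∈ σ k ∧ c (k + 1) ∈ σ k) ∧
    (∀ i j, i < j → j < n - 1 → ∀ x, x ∈ σ i → x ∈ σ j → j = i + 1 ∧ x = c j) ∧
    P = ⋃ k ∈ Finset.range (n - 1), σ k

/-- `M` is a cycle-free partial order: between any two points there is at most one path. -/
def IsCFPO (M : Type*) [PartialOrder M] : Prop :=
  ∀ (a b : M) (P Q : Set (DMcut M)), IsPath a b P → IsPath a b Q → P = Q

/-- `M` is connected: between any two points there is a path. -/
def PathConn (M : Type*) [PartialOrder M] : Prop :=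
  ∀ a b : M, ∃ P, IsPath a b P

/-- `s` belongs to every path from `a` to `b`; when `M` is a connected CFPO this
says exactly that `s` lies on the unique path `⟨a,b⟩`. -/
def memPath {M : Type*} [PartialOrder M] (s a b : M) : Prop :=
  ∀ P, IsPath a b P → toDM s ∈ P

/-! ## The `T(M)` construction -/

/-- The tree order of the `T(M)` construction: `s ≤_T t` iff `s ∈ ⟨r,t⟩`. -/
def leT {M : Type*} [PartialOrder M] (r s t : M) : Prop := memPath s r t

/-- Auxiliary recursion computing `((X_n, Y_n), ⋃_{i ≤ n} (X_i ∪ Y_i))`. -/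
def XYaux {M : Type*} [PartialOrder M] (r : M) : ℕ → (Set M × Set M) × Set M
  | 0 => (({t | r ≤ t}, {t | t < r}), {t | r ≤ t} ∪ {t | t < r})
  | n + 1 =>
    let p := XYaux r n
    let Xn : Set M := {t | ∃ y ∈ p.1.2, y ≤ t} \ p.2
    let Yn : Set M := {t | ∃ x ∈ p.1.1, t < x} \ p.2
    ((Xn, Yn), p.2 ∪ Xn ∪ Yn)

/-- The set `X_n` of the `T(M)` construction. -/
def Xset {M : Type*} [PartialOrder M] (r : M) (n : ℕ) : Set M := (XYaux r n).1.1

/-- The set `Y_n` of the `T(M)` construction. -/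
def Yset {M : Type*} [PartialOrder M] (r : M) (n : ℕ) : Set M := (XYaux r n).1.2

/-- The set `X = ⋃ X_n`; the predicate `U` of the `T(M)` construction holds at `t`
iff `t ∈ Xfull r`. -/
def Xfull {M : Type*} [PartialOrder M] (r : M) : Set M := ⋃ n, Xset r n

/-! ## Automorphism groups, trees, treelike CFPOs -/

/-- The group of colour-preserving order-automorphisms of a coloured partial
order, as a subgroup of the symmetric group. -/
def colouredAut (M : Type*) [PartialOrder M] {C : Type*} (χ : M → C) :
    Subgroup (Equiv.Perm M) where
  carrier := {f | (∀ s t : M, f s ≤ f t ↔ s ≤ t) ∧ ∀ s, χ (f s) = χ s}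
  one_mem' := ⟨fun _ _ => Iff.rfl, fun _ => rfl⟩
  mul_mem' := by
    rintro f g ⟨hf1, hf2⟩ ⟨hg1, hg2⟩
    refine ⟨fun s t => ?_, fun s => ?_⟩
    · simpa [Equiv.Perm.mul_apply] using (hf1 (g s) (g t)).trans (hg1 s t)
    · simpa [Equiv.Perm.mul_apply] using (hf2 (g s)).trans (hg2 s)
  inv_mem' := by
    rintro f ⟨hf1, hf2⟩
    refine ⟨fun s t => ?_, fun s => ?_⟩
    · rw [← hf1 (f⁻¹ s) (f⁻¹ t)]
      simp
    · have := hf2 (f⁻¹ s)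
      simpa using this.symm

/-- The group of all order-automorphisms of a partial order, as a subgroup of
the symmetric group (the trivial colouring). -/
def orderAutGroup (M : Type*) [PartialOrder M] : Subgroup (Equiv.Perm M) :=
  colouredAut M fun _ => (PUnit.unit : PUnit.{1})

/-- A tree: every two elements have a common lower bound and every
initial segment `{s : s ≤ t}` is linearly ordered. -/
def IsTree (T : Type*) [PartialOrder T] : Prop :=
  (∀ s t : T, ∃ w, w ≤ s ∧ w ≤ t) ∧
    ∀ t a b : T, a ≤ t → b ≤ t → a ≤ b ∨ b ≤ a

/-- A coloured partial order is treelike if there is a coloured tree whose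
(colour-preserving) automorphism group is abstractly isomorphic to its own. -/
def Treelike {M : Type u} [PartialOrder M] {C : Type v} (χ : M → C) : Prop :=
  ∃ (T : Type (max u v)) (instT : PartialOrder T) (D : Type (max u v)) (ψ : T → D),
    @IsTree T instT ∧ Nonempty (colouredAut M χ ≃* @colouredAut T instT D ψ)

/-! ## The alternating chain `Alt` and its finite/one-sided variants -/

/-- Points of `Alt` within an index set `S ⊆ ℤ`, ordered so that odd indices are
valleys and even indices are peaks, with no other strict comparabilities. -/
structure AltSub (S : Set ℤ) : Type where
  val : ℤ
  mem : val ∈ S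

instance (S : Set ℤ) : PartialOrder (AltSub S) where
  le a b := a.val = b.val ∨ (Even b.val ∧ (a.val = b.val - 1 ∨ a.val = b.val + 1))
  le_refl a := Or.inl rfl
  le_trans a b c hab hbc := by
    rcases hab with h1 | ⟨⟨r, hr⟩, h1⟩
    · rcases hbc with h2 | ⟨he2, h2⟩
      · exact Or.inl (h1.trans h2)
      · exact Or.inr ⟨he2, by omega⟩
    · rcases hbc with h2 | ⟨⟨s, hs⟩, h2⟩
      · exact Or.inr ⟨⟨r, by omega⟩, by omega⟩
      · omega
  le_antisymm a b hab hba := by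
    have hv : a.val = b.val := by
      rcases hab with h1 | ⟨⟨r, hr⟩, h1⟩
      · exact h1
      · rcases hba with h2 | ⟨⟨s, hs⟩, h2⟩ <;> omega
    cases a; cases b; simp_all

/-- The two-sided alternating chain `Alt`. -/
abbrev AltZ : Type := AltSub Set.univ

/-- `Alt_n`, the restriction of `Alt` to `{a_0, …, a_{n-1}}`. -/
abbrev AltN (n : ℕ) : Type := AltSub {z | 0 ≤ z ∧ z < (n : ℤ)}

/-- `Alt_ω`, the restriction of `Alt` to `{a_i : i ≥ 0}`. -/
abbrev AltOmega : Type := AltSub {z | 0 ≤ z}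

/-- `P` embeds into `M` as an induced suborder. -/
def EmbedsIn (P M : Type*) [PartialOrder P] [PartialOrder M] : Prop :=
  Nonempty (P ↪o M)

/-- `M` is a `CFPO_n`: one of `Alt_n`, `Alt_n*` embeds but neither `Alt_{n+1}`
nor `Alt_{n+1}*` does. -/
def IsCFPOIndex (n : ℕ) (M : Type*) [PartialOrder M] : Prop :=
  (EmbedsIn (AltN n) M ∨ EmbedsIn (AltN n)ᵒᵈ M) ∧
    ¬EmbedsIn (AltN (n + 1)) M ∧ ¬EmbedsIn (AltN (n + 1))ᵒᵈ M

/-- `M` is a `CFPO_ω`: one of `Alt_ω`, `Alt_ω*` embeds but `Alt` does not. -/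
def IsCFPOomega (M : Type*) [PartialOrder M] : Prop :=
  (EmbedsIn AltOmega M ∨ EmbedsIn AltOmegaᵒᵈ M) ∧ ¬EmbedsIn AltZ M

/-! ## Wreath products, regular trees, dendromorphic groups -/

/-- The action of `H` on `S → G` by permuting coordinates. -/
def wreathConj (G : Type*) [Group G] (S : Type*) (H : Type*) [Group H] [MulAction H S] :
    H →* MulAut (S → G) where
  toFun h :=
    { toFun := fun f s => f (h⁻¹ • s)
      invFun := fun f s => f (h • s)
      left_inv := fun f => by funext s; simp
      right_inv := fun f => by funext s; simp
      map_mul' := fun f g => rfl }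
  map_one' := by
    ext f s
    simp
  map_mul' h₁ h₂ := by
    ext f s
    simp [mul_smul]

/-- The wreath product `G ≀_S H`: the semidirect product of `∏_{s ∈ S} G` by `H`,
acting by permuting the coordinates. -/
abbrev Wreath (G : Type*) [Group G] (S : Type*) (H : Type*) [Group H] [MulAction H S] :
    Type _ :=
  SemidirectProduct (S → G) H (wreathConj G S H)

/-- `ℤ ≀ ℤ₂`, with `ℤ₂` acting on a two-element set. -/
abbrev ZwrZ2 : Type := Wreath (Multiplicative ℤ) (Fin 2) (Equiv.Perm (Fin 2))

/-- `Sym(ω)`. -/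
abbrev SymOmega : Type := Equiv.Perm ℕ

/-- `Sym(ω) ≀ ℤ₂`, with `ℤ₂` acting on a two-element set. -/
abbrev SymWrZ2 : Type := Wreath (Equiv.Perm ℕ) (Fin 2) (Equiv.Perm (Fin 2))

/-- The ramification class at `x` of an element `y > x`. -/
def ramClass {T : Type*} [PartialOrder T] (x y : T) : Set T :=
  {z | x < z ∧ ∃ w, x < w ∧ w ≤ y ∧ w ≤ z}

/-- The set of ramification classes at `x`. -/
def ramClasses {T : Type*} [PartialOrder T] (x : T) : Set (Set T) :=
  {A | ∃ y, x < y ∧ A = ramClass x y}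

/-- A regular tree. -/
def IsRegularTree (T : Type*) [PartialOrder T] : Prop :=
  (∀ c d : Set T, IsMaxChain (· ≤ ·) c → IsMaxChain (· ≤ ·) d → Nonempty (c ≃o d)) ∧
    (∀ c : Set T, IsMaxChain (· ≤ ·) c → c.Finite ∨ Nonempty (c ≃o ℕ)) ∧
    (∀ x : T, (∃ y, x < y) → (ramClasses x).Finite ∧ 2 ≤ (ramClasses x).ncard) ∧
    ∀ x y : T, Cardinal.mk {t | t ≤ x} = Cardinal.mk {t | t ≤ y} →
      Cardinal.mk (ramClasses x) = Cardinal.mk (ramClasses y)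

/-- A group is a dendromorphic factor if it is isomorphic to `ℤ ≀ ℤ₂`, `Sym(ω)`,
`Sym(ω) ≀ ℤ₂`, or the automorphism group of a regular tree. -/
def IsDendroFactor (K : Type*) [Group K] : Prop :=
  Nonempty (K ≃* ZwrZ2) ∨ Nonempty (K ≃* SymOmega) ∨ Nonempty (K ≃* SymWrZ2) ∨
    ∃ (T : Type u) (instT : PartialOrder T),
      @IsTree T instT ∧ @IsRegularTree T instT ∧
        Nonempty (K ≃* @orderAutGroup T instT)

/-- A dendromorphic group: a Cartesian product of a nonempty family of
dendromorphic factors. -/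
def IsDendromorphic (K : Type*) [Group K] : Prop :=
  ∃ (ι : Type u) (F : ι → GrpCat.{u}), Nonempty ι ∧
    (∀ i : ι, IsDendroFactor.{u} (F i)) ∧ Nonempty (K ≃* ((i : ι) → F i))

/-! Cutting a path from `a` to `b` at one of its points `s` leaves a path from `a` to `s`
contained in it, which reaches `b` only if `s = b`; this gives transitivity and antisymmetry
of `≤_T`, while reflexivity and minimality of `r` just say that paths contain their ends.
For linearity, two points `s₁, s₂` of the path `⟨r, t⟩` come one after the other along it;
cutting at the later one gives a path from `r` to it that passes through the earlier one, and
by cycle-freeness this is the only path from `r` to it. -/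

section IsMaxChainIn

variable {α : Type*} [Preorder α]

lemma IsMaxChainIn.toDual {S σ : Set α} (h : IsMaxChainIn S σ) :
    IsMaxChainIn (OrderDual.ofDual ⁻¹' S) (OrderDual.ofDual ⁻¹' σ) :=
  ⟨h.1, h.2.1.symm, fun τ hτ hτc => h.2.2 τ hτ hτc.symm⟩

lemma IsMaxChainIn.ofDual {S σ : Set αᵒᵈ} (h : IsMaxChainIn S σ) :
    IsMaxChainIn (OrderDual.toDual ⁻¹' S) (OrderDual.toDual ⁻¹' σ) :=
  ⟨h.1, h.2.1.symm, fun τ hτ hτc => h.2.2 τ hτ hτc.symm⟩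

/- A chain of `[x, s]` properly extending `σ ∩ [x, s]` would, together with the part of `σ`
above `s`, properly extend `σ`. -/
lemma IsMaxChainIn.inter_Icc_left {x y s : α} {σ : Set α} (h : IsMaxChainIn (Icc x y) σ)
    (hs : s ∈ σ) : IsMaxChainIn (Icc x s) (σ ∩ Icc x s) := by
  obtain ⟨hσS, hσc, hmax⟩ := h
  refine ⟨inter_subset_right, hσc.mono inter_subset_left, fun τ hτS hτc hστ => ?_⟩
  have hsy : s ≤ y := (hσS hs).2
  have hext : τ ∪ {w ∈ σ | s ≤ w} = σ := by
    refine hmax _ (union_subset (fun z hz => ⟨(hτS hz).1, (hτS hz).2.trans hsy⟩)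
      fun z hz => hσS hz.1) ?_ fun w hw => ?_
    · refine isChain_union.2 ⟨hτc, hσc.mono fun w hw => hw.1, fun a ha b hb _ => ?_⟩
      exact Or.inl ((hτS ha).2.trans hb.2)
    · rcases eq_or_ne w s with rfl | hne
      · exact Or.inr ⟨hw, le_rfl⟩
      rcases hσc hw hs hne with hws | hsw
      · exact Or.inl (hστ ⟨hw, (hσS hw).1, hws⟩)
      · exact Or.inr ⟨hw, hsw⟩
  exact Subset.antisymm (fun z hz => ⟨hext ▸ Or.inl hz, hτS hz⟩) hστ

lemma IsMaxChainIn.inter_Icc_right {x y s : α} {σ : Set α} (h : IsMaxChainIn (Icc y x) σ)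
    (hs : s ∈ σ) : IsMaxChainIn (Icc s x) (σ ∩ Icc s x) := by
  have h' := h.toDual
  rw [← Icc_toDual] at h'
  have := (h'.inter_Icc_left (s := OrderDual.toDual s) hs).ofDual
  rw [Icc_toDual, preimage_inter] at this
  exact this

end IsMaxChainIn

section Paths

variable {M : Type*} [PartialOrder M]

lemma toDM_le_toDM {a b : M} : toDM a ≤ toDM b ↔ a ≤ b :=
  ⟨fun h => h le_rfl, fun h _ hx => le_trans hx h⟩

lemma toDM_injective : Function.Injective (toDM : M → DMcut M) := fun _ _ h =>
  le_antisymm (toDM_le_toDM.1 h.le) (toDM_le_toDM.1 h.ge)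

section betweenSet

variable {x y z : DMcut M}

lemma betweenSet_comm (x y : DMcut M) : betweenSet x y = betweenSet y x :=
  ext fun _ => or_comm

lemma betweenSet_of_le (h : x ≤ y) : betweenSet x y = Icc x y :=
  ext fun _ => ⟨fun hz => hz.elim id fun ⟨h1, h2⟩ => ⟨h.trans h1, h2.trans h⟩, Or.inl⟩

lemma betweenSet_self (x : DMcut M) : betweenSet x x = {x} := by
  rw [betweenSet_of_le le_rfl, Icc_self]

lemma comparable_of_mem_betweenSet (hz : z ∈ betweenSet x y) : x ≤ z ∨ z ≤ x :=
  hz.imp And.left And.right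

lemma left_mem_betweenSet (h : x ≤ y ∨ y ≤ x) : x ∈ betweenSet x y :=
  h.imp (fun h => ⟨le_rfl, h⟩) fun h => ⟨h, le_rfl⟩

lemma right_mem_betweenSet (h : x ≤ y ∨ y ≤ x) : y ∈ betweenSet x y :=
  betweenSet_comm x y ▸ left_mem_betweenSet h.symm

lemma lt_of_mem_betweenSet_of_lt (hyx : y < x) (hz : z ∈ betweenSet x y) (hne : z ≠ x) :
    z < x := by
  rw [betweenSet_comm, betweenSet_of_le hyx.le] at hz
  exact lt_of_le_of_ne hz.2 hne

lemma lt_of_mem_betweenSet_of_gt (hxy : x < y) (hz : z ∈ betweenSet x y) (hne : z ≠ x) :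
    x < z := by
  rw [betweenSet_of_le hxy.le] at hz
  exact lt_of_le_of_ne hz.1 hne.symm

lemma eq_of_mem_betweenSet_of_mem_betweenSet (hy : y ∈ betweenSet x z)
    (hz : z ∈ betweenSet x y) : y = z := by
  rcases hy with ⟨h1, h2⟩ | ⟨h1, h2⟩ <;> rcases hz with ⟨h3, h4⟩ | ⟨h3, h4⟩
  exacts [le_antisymm h2 h4, le_antisymm h2 (h4.trans h1), le_antisymm (h2.trans h3) h1,
    le_antisymm h3 h1]

lemma mem_betweenSet_or_mem_betweenSet {w : DMcut M} (hxy : x ≤ y ∨ y ≤ x)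
    (hz : z ∈ betweenSet x y) (hw : w ∈ betweenSet x y) (hzw : z ≤ w ∨ w ≤ z) :
    z ∈ betweenSet x w ∨ w ∈ betweenSet x z := by
  rcases hxy with h | h
  · rw [betweenSet_of_le h] at hz hw
    exact hzw.imp (fun h' => Or.inl ⟨hz.1, h'⟩) fun h' => Or.inl ⟨hw.1, h'⟩
  · rw [betweenSet_comm, betweenSet_of_le h] at hz hw
    exact hzw.symm.imp (fun h' => Or.inr ⟨h', hz.2⟩) fun h' => Or.inr ⟨h', hw.2⟩

lemma IsMaxChainIn.inter_betweenSet {σ : Set (DMcut M)} {s : DMcut M} (hxy : x ≤ y ∨ y ≤ x)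
    (h : IsMaxChainIn (betweenSet x y) σ) (hs : s ∈ σ) :
    IsMaxChainIn (betweenSet x s) (σ ∩ betweenSet x s) := by
  rcases hxy with hxy | hyx
  · rw [betweenSet_of_le hxy] at h
    rw [betweenSet_of_le (h.1 hs).1]
    exact h.inter_Icc_left hs
  · rw [betweenSet_comm, betweenSet_of_le hyx] at h
    rw [betweenSet_comm, betweenSet_of_le (h.1 hs).2]
    exact h.inter_Icc_right hs

end betweenSet

structure IsPathSeq (a b : M) (n : ℕ) (c : ℕ → DMcut M) (σ : ℕ → Set (DMcut M)) : Prop where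
  isConnSet : IsConnSet a b n c
  isMaxChainIn : ∀ k < n - 1, IsMaxChainIn (betweenSet (c k) (c (k + 1))) (σ k)
  left_mem : ∀ k < n - 1, c k ∈ σ k
  right_mem : ∀ k < n - 1, c (k + 1) ∈ σ k
  eq_of_mem_of_mem : ∀ i j, i < j → j < n - 1 → ∀ x ∈ σ i, x ∈ σ j → j = i + 1 ∧ x = c j

lemma isPath_iff {a b : M} {P : Set (DMcut M)} :
    IsPath a b P ↔ ∃ n c σ, IsPathSeq a b n c σ ∧ P = ⋃ k ∈ Finset.range (n - 1), σ k :=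
  ⟨fun ⟨n, c, σ, hc, hσ, hdisj, hP⟩ => ⟨n, c, σ,
      ⟨hc, fun k hk => (hσ k hk).1, fun k hk => (hσ k hk).2.1, fun k hk => (hσ k hk).2.2,
        hdisj⟩, hP⟩,
    fun ⟨n, c, σ, h, hP⟩ => ⟨n, c, σ, h.isConnSet,
      fun k hk => ⟨h.isMaxChainIn k hk, h.left_mem k hk, h.right_mem k hk⟩,
      h.eq_of_mem_of_mem, hP⟩⟩

def pathPrefix (c : ℕ → DMcut M) (σ : ℕ → Set (DMcut M)) (k : ℕ) (x : DMcut M) :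
    Set (DMcut M) :=
  (⋃ i ∈ Finset.range k, σ i) ∪ (σ k ∩ betweenSet (c k) x)

lemma pathPrefix_subset {c : ℕ → DMcut M} {σ : ℕ → Set (DMcut M)} {n k : ℕ} {x : DMcut M}
    (hk : k < n - 1) : pathPrefix c σ k x ⊆ ⋃ i ∈ Finset.range (n - 1), σ i := by
  rintro y (hy | hy)
  · simp only [mem_iUnion, Finset.mem_range] at hy ⊢
    obtain ⟨i, hi, hy⟩ := hy
    exact ⟨i, by omega, hy⟩
  · exact mem_biUnion (Finset.mem_range.2 hk) hy.1

lemma isPathSeq_refl (a : M) : IsPathSeq a a 2 (fun _ => toDM a) (fun _ => {toDM a}) where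
  isConnSet := ⟨le_rfl, rfl, rfl, fun _ _ => Or.inl le_rfl, fun _ _ _ => by omega⟩
  isMaxChainIn _ _ := by
    rw [betweenSet_self]
    exact ⟨subset_rfl, IsChain.singleton, fun τ hτ _ hsub => Subset.antisymm hτ hsub⟩
  left_mem _ _ := rfl
  right_mem _ _ := rfl
  eq_of_mem_of_mem _ _ _ _ := by omega

namespace IsPathSeq

variable {a b s : M} {n k : ℕ} {c : ℕ → DMcut M} {σ : ℕ → Set (DMcut M)}

lemma take (h : IsPathSeq a b n c σ) (hk : 0 < k) (hkn : k < n) (hck : c k = toDM s) :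
    IsPathSeq a s (k + 1) c σ where
  isConnSet := ⟨by omega, h.isConnSet.first, hck, fun i hi => h.isConnSet.comp i (by omega),
    fun i hi0 hi => h.isConnSet.alt i hi0 (by omega)⟩
  isMaxChainIn i hi := h.isMaxChainIn i (by omega)
  left_mem i hi := h.left_mem i (by omega)
  right_mem i hi := h.right_mem i (by omega)
  eq_of_mem_of_mem i j hij hj := h.eq_of_mem_of_mem i j hij (by omega)

lemma cut (h : IsPathSeq a b n c σ) (hk : k < n - 1) (hs : toDM s ∈ σ k) (hne : toDM s ≠ c k) :
    IsPathSeq a s (k + 2) (fun i => if i ≤ k then c i else toDM s)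
      (fun j => if j < k then σ j else σ k ∩ betweenSet (c k) (toDM s)) := by
  have hsk : toDM s ∈ betweenSet (c k) (c (k + 1)) := (h.isMaxChainIn k hk).1 hs
  have hcomp : c k ≤ toDM s ∨ toDM s ≤ c k := comparable_of_mem_betweenSet hsk
  refine ⟨⟨by omega, by simpa using h.isConnSet.first, by simp, fun i hi => ?_,
    fun i hi0 hi => ?_⟩, fun j hj => ?_, fun j hj => ?_, fun j hj => ?_,
    fun i j hij hj x hxi hxj => ?_⟩
  · rcases Nat.lt_or_ge i k with hik | hik
    · simpa [hik.le, Nat.succ_le_of_lt hik] using h.isConnSet.comp i (by omega)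
    · obtain rfl : i = k := by omega
      simpa using hcomp
  · rcases Nat.lt_or_ge i k with hik | hik
    · simpa [hik.le, Nat.succ_le_of_lt hik, (Nat.sub_le i 1).trans hik.le]
        using h.isConnSet.alt i hi0 (by omega)
    · obtain rfl : i = k := by omega
      simp only [le_refl, if_true, Nat.sub_le, Nat.not_succ_le_self, if_false]
      rcases h.isConnSet.alt i hi0 hk with ⟨h1, h2⟩ | ⟨h1, h2⟩
      · exact Or.inl ⟨h1, lt_of_mem_betweenSet_of_lt h2 hsk hne⟩
      · exact Or.inr ⟨h1, lt_of_mem_betweenSet_of_gt h2 hsk hne⟩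
  · rcases Nat.lt_or_ge j k with hjk | hjk
    · simpa [hjk, hjk.le, Nat.succ_le_of_lt hjk] using h.isMaxChainIn j (by omega)
    · obtain rfl : j = k := by omega
      simpa using (h.isMaxChainIn j hk).inter_betweenSet (h.isConnSet.comp j hk) hs
  · rcases Nat.lt_or_ge j k with hjk | hjk
    · simpa [hjk, hjk.le] using h.left_mem j (by omega)
    · obtain rfl : j = k := by omega
      simpa using ⟨h.left_mem j hk, left_mem_betweenSet hcomp⟩
  · rcases Nat.lt_or_ge j k with hjk | hjk
    · simpa [hjk, Nat.succ_le_of_lt hjk] using h.right_mem j (by omega)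
    · obtain rfl : j = k := by omega
      simpa using ⟨hs, right_mem_betweenSet hcomp⟩
  · have hik : i < k := by omega
    simp only [hik, if_true] at hxi
    rcases Nat.lt_or_ge j k with hjk | hjk
    · simp only [hjk, if_true] at hxj
      simpa [hjk.le] using h.eq_of_mem_of_mem i j hij (by omega) x hxi hxj
    · obtain rfl : j = k := by omega
      simp only [lt_irrefl, if_false] at hxj
      simpa using h.eq_of_mem_of_mem i j hij hk x hxi hxj.1

lemma start_mem (h : IsPathSeq a b n c σ) : toDM a ∈ σ 0 :=
  h.isConnSet.first ▸ h.left_mem 0 (by have := h.isConnSet.two_le; omega)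

lemma end_mem (h : IsPathSeq a b n c σ) : toDM b ∈ σ (n - 2) := by
  have h2 := h.isConnSet.two_le
  simpa [show n - 2 + 1 = n - 1 by omega, h.isConnSet.last] using h.right_mem (n - 2) (by omega)

lemma end_notMem (h : IsPathSeq a b n c σ) {i : ℕ} (hi : i < n - 2) : toDM b ∉ σ i := by
  intro hb
  obtain ⟨-, hbc⟩ := h.eq_of_mem_of_mem i (n - 2) hi (by omega) _ hb h.end_mem
  have halt := h.isConnSet.alt (n - 2) (by omega) (by omega)
  rw [show n - 2 + 1 = n - 1 by omega, h.isConnSet.last, ← hbc] at halt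
  rcases halt with ⟨-, hlt⟩ | ⟨-, hlt⟩ <;> exact lt_irrefl _ hlt

lemma isPath_pathPrefix (h : IsPathSeq a b n c σ) (hk : k < n - 1) (hs : toDM s ∈ σ k) :
    IsPath a s (pathPrefix c σ k (toDM s)) := by
  rw [isPath_iff]
  by_cases hne : toDM s = c k
  · rcases Nat.eq_zero_or_pos k with rfl | hk0
    · obtain rfl : s = a := toDM_injective (hne.trans h.isConnSet.first)
      refine ⟨2, _, _, isPathSeq_refl s, ?_⟩
      simp [pathPrefix, hne, betweenSet_self, h.left_mem 0 hk]
    · refine ⟨k + 1, c, σ, h.take hk0 (by omega) hne.symm, ?_⟩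
      have hck : c k ∈ ⋃ i ∈ Finset.range k, σ i :=
        mem_biUnion (Finset.mem_range.2 (Nat.sub_one_lt_of_lt hk0))
          (by simpa [Nat.sub_add_cancel hk0] using h.right_mem (k - 1) (by omega))
      rw [pathPrefix, ← hne, betweenSet_self, hne,
        union_eq_left.2 (inter_subset_right.trans (singleton_subset_iff.2 hck))]
      rfl
  · refine ⟨k + 2, _, _, h.cut hk hs hne, ?_⟩
    rw [show k + 2 - 1 = k + 1 from rfl, Finset.range_add_one, Finset.set_biUnion_insert,
      pathPrefix, union_comm]
    simp only [lt_irrefl, if_false]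
    congr 1
    exact iUnion₂_congr fun i hi => (if_pos (Finset.mem_range.1 hi)).symm

lemma eq_of_mem_pathPrefix (h : IsPathSeq a b n c σ) (hk : k < n - 1) (hs : toDM s ∈ σ k)
    (hb : toDM b ∈ pathPrefix c σ k (toDM s)) : s = b := by
  rcases hb with hb | ⟨hbk, hb⟩
  · simp only [mem_iUnion, Finset.mem_range] at hb
    obtain ⟨i, hi, hb⟩ := hb
    exact absurd hb (h.end_notMem (by omega))
  · obtain rfl : k = n - 2 := by
      by_contra hne
      exact h.end_notMem (by omega) hbk
    have hsb : toDM s ∈ betweenSet (c (n - 2)) (toDM b) := by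
      simpa [show n - 2 + 1 = n - 1 by omega, h.isConnSet.last] using (h.isMaxChainIn _ hk).1 hs
    exact toDM_injective (eq_of_mem_betweenSet_of_mem_betweenSet hsb hb)

lemma leT_of_mem_pathPrefix {r t u v : M} (hM : IsCFPO M) (h : IsPathSeq r t n c σ)
    (hk : k < n - 1) (hv : toDM v ∈ σ k) (hu : toDM u ∈ pathPrefix c σ k (toDM v)) :
    leT r u v :=
  fun P hP => hM r v P _ hP (h.isPath_pathPrefix hk hv) ▸ hu

end IsPathSeq

namespace IsPath

variable {a b s : M} {P : Set (DMcut M)}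

lemma start_mem (hP : IsPath a b P) : toDM a ∈ P := by
  obtain ⟨n, c, σ, h, rfl⟩ := isPath_iff.1 hP
  exact mem_biUnion (Finset.mem_range.2 (by have := h.isConnSet.two_le; omega)) h.start_mem

lemma end_mem (hP : IsPath a b P) : toDM b ∈ P := by
  obtain ⟨n, c, σ, h, rfl⟩ := isPath_iff.1 hP
  exact mem_biUnion (Finset.mem_range.2 (by have := h.isConnSet.two_le; omega)) h.end_mem

lemma exists_subpath (hP : IsPath a b P) (hs : toDM s ∈ P) :
    ∃ Q, IsPath a s Q ∧ Q ⊆ P ∧ (toDM b ∈ Q → s = b) := by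
  obtain ⟨n, c, σ, h, rfl⟩ := isPath_iff.1 hP
  simp only [mem_iUnion, Finset.mem_range] at hs
  obtain ⟨k, hk, hs⟩ := hs
  exact ⟨_, h.isPath_pathPrefix hk hs, pathPrefix_subset hk, h.eq_of_mem_pathPrefix hk hs⟩

lemma leT_total {r t s₁ s₂ : M} (hM : IsCFPO M) (hP : IsPath r t P) (h₁ : toDM s₁ ∈ P)
    (h₂ : toDM s₂ ∈ P) : leT r s₁ s₂ ∨ leT r s₂ s₁ := by
  obtain ⟨n, c, σ, h, rfl⟩ := isPath_iff.1 hP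
  simp only [mem_iUnion, Finset.mem_range] at h₁ h₂
  obtain ⟨k₁, hk₁, hs₁⟩ := h₁
  obtain ⟨k₂, hk₂, hs₂⟩ := h₂
  have of_lt : ∀ {u v : M} {i j : ℕ}, i < j → j < n - 1 → toDM u ∈ σ i → toDM v ∈ σ j →
      leT r u v := fun hij hj hu hv =>
    h.leT_of_mem_pathPrefix hM hj hv (Or.inl (mem_biUnion (Finset.mem_range.2 hij) hu))
  rcases Nat.lt_trichotomy k₁ k₂ with hlt | rfl | hgt
  · exact Or.inl (of_lt hlt hk₂ hs₁ hs₂)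
  · have hσ := h.isMaxChainIn k₁ hk₁
    refine (mem_betweenSet_or_mem_betweenSet (h.isConnSet.comp k₁ hk₁) (hσ.1 hs₁) (hσ.1 hs₂)
      (hσ.2.1.total hs₁ hs₂)).imp (fun hb => ?_) fun hb => ?_
    · exact h.leT_of_mem_pathPrefix hM hk₁ hs₂ (Or.inr ⟨hs₁, hb⟩)
    · exact h.leT_of_mem_pathPrefix hM hk₁ hs₁ (Or.inr ⟨hs₂, hb⟩)
  · exact Or.inr (of_lt hgt hk₁ hs₂ hs₁)

end IsPath

section leT

variable {r s t u : M}

lemma leT_refl (r s : M) : leT r s s := fun _ hP => hP.end_mem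

lemma root_leT (r s : M) : leT r r s := fun _ hP => hP.start_mem

lemma leT_trans (hst : leT r s t) (htu : leT r t u) : leT r s u := fun P hP => by
  obtain ⟨Q, hQ, hQP, -⟩ := hP.exists_subpath (htu P hP)
  exact hQP (hst Q hQ)

lemma leT_antisymm (hconn : PathConn M) (hst : leT r s t) (hts : leT r t s) : s = t := by
  obtain ⟨P, hP⟩ := hconn r t
  obtain ⟨Q, hQ, -, hend⟩ := hP.exists_subpath (hst P hP)
  exact hend (hts Q hQ)

lemma leT_total_of_leT (hM : IsCFPO M) (hconn : PathConn M) {s₁ s₂ : M} (h₁ : leT r s₁ t)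
    (h₂ : leT r s₂ t) : leT r s₁ s₂ ∨ leT r s₂ s₁ :=
  let ⟨P, hP⟩ := hconn r t
  hP.leT_total hM (h₁ P hP) (h₂ P hP)

end leT

end Paths

theorem stmt2_general {M : Type*} [PartialOrder M] (hM : IsCFPO M) (hconn : PathConn M)
    (r : M) :
    (∀ s : M, leT r s s) ∧
      (∀ s t u : M, leT r s t → leT r t u → leT r s u) ∧
      (∀ s t : M, leT r s t → leT r t s → s = t) ∧
      (∀ s : M, leT r r s) ∧
      (∀ s t : M, ∃ w, leT r w s ∧ leT r w t) ∧
      (∀ t s₁ s₂ : M, leT r s₁ t → leT r s₂ t → leT r s₁ s₂ ∨ leT r s₂ s₁) :=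
  ⟨leT_refl r, fun _ _ _ => leT_trans, fun _ _ => leT_antisymm hconn, root_leT r,
    fun s t => ⟨r, root_leT r s, root_leT r t⟩, fun _ _ _ => leT_total_of_leT hM hconn⟩

/-- `≤_T` is a partial order on `M`, `r` is its least element, and
`⟨M, ≤_T⟩` is a tree. -/
theorem stmt2 {M : Type*} [PartialOrder M] (hM : IsCFPO M) (hconn : PathConn M)
    (r : M) (hr : ∀ φ : M ≃o M, φ r = r) :
    (∀ s : M, leT r s s) ∧
      (∀ s t u : M, leT r s t → leT r t u → leT r s u) ∧
      (∀ s t : M, leT r s t → leT r t s → s = t) ∧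
      (∀ s : M, leT r r s) ∧
      (∀ s t : M, ∃ w, leT r w s ∧ leT r w t) ∧
      (∀ t s₁ s₂ : M, leT r s₁ t → leT r s₂ t → leT r s₁ s₂ ∨ leT r s₂ s₁) :=
  stmt2_general hM hconn r
end

section
/- Let M be a connected cycle-free partial order and let r ∈ M be a point fixed by every automorphism of M. Then every order-automorphism φ of ⟨M, ≤_M⟩ maps each set X_n of the T(M) construction onto X_n and each set Y_n onto Y_n. -/
open Set FirstOrder

universe u v

section XYaux

variable {M N : Type*} [PartialOrder M] [PartialOrder N]

lemma OrderIso.image_setOf_exists_le (φ : M ≃o N) (S : Set M) :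
    φ '' {t | ∃ s ∈ S, s ≤ t} = {t | ∃ s ∈ φ '' S, s ≤ t} := by
  ext t
  refine ⟨?_, fun ⟨_, ⟨s, hs, rfl⟩, hst⟩ => ⟨φ.symm t, ⟨s, hs, ?_⟩, φ.apply_symm_apply t⟩⟩
  · rintro ⟨t, ⟨s, hs, hst⟩, rfl⟩
    exact ⟨φ s, mem_image_of_mem φ hs, φ.le_iff_le.2 hst⟩
  · rwa [← φ.le_iff_le, φ.apply_symm_apply]

lemma OrderIso.image_setOf_exists_gt (φ : M ≃o N) (S : Set M) :
    φ '' {t | ∃ s ∈ S, t < s} = {t | ∃ s ∈ φ '' S, t < s} := by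
  ext t
  refine ⟨?_, fun ⟨_, ⟨s, hs, rfl⟩, hts⟩ => ⟨φ.symm t, ⟨s, hs, ?_⟩, φ.apply_symm_apply t⟩⟩
  · rintro ⟨t, ⟨s, hs, hts⟩, rfl⟩
    exact ⟨φ s, mem_image_of_mem φ hs, φ.lt_iff_lt.2 hts⟩
  · rwa [← φ.lt_iff_lt, φ.apply_symm_apply]

lemma XYaux_orderIso (φ : M ≃o N) (r : M) (n : ℕ) :
    XYaux (φ r) n =
      ((φ '' (XYaux r n).1.1, φ '' (XYaux r n).1.2), φ '' (XYaux r n).2) := by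
  induction n with
  | zero =>
    simp only [XYaux, image_union]
    exact congrArg₂ _ (congrArg₂ _ (φ.image_Ici r).symm (φ.image_Iio r).symm)
      (congrArg₂ _ (φ.image_Ici r).symm (φ.image_Iio r).symm)
  | succ n ih =>
    simp only [XYaux, ih, image_union, image_sdiff φ.injective,
      φ.image_setOf_exists_le, φ.image_setOf_exists_gt]

lemma Xset_orderIso (φ : M ≃o N) (r : M) (n : ℕ) : Xset (φ r) n = φ '' Xset r n := by
  rw [Xset, XYaux_orderIso]; rfl

lemma Yset_orderIso (φ : M ≃o N) (r : M) (n : ℕ) : Yset (φ r) n = φ '' Yset r n := by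
  rw [Yset, XYaux_orderIso]; rfl

end XYaux

theorem stmt6_general {M : Type*} [PartialOrder M]
    (r : M) (hr : ∀ φ : M ≃o M, φ r = r) (φ : M ≃o M) :
    (∀ n : ℕ, φ '' Xset r n = Xset r n) ∧ ∀ n : ℕ, φ '' Yset r n = Yset r n := by
  refine ⟨fun n => ?_, fun n => ?_⟩
  · rw [← Xset_orderIso, hr]
  · rw [← Yset_orderIso, hr]

/-- every order-automorphism of `M` maps each `X_n` onto `X_n` and
each `Y_n` onto `Y_n`. -/
theorem stmt6 {M : Type*} [PartialOrder M] (hM : IsCFPO M) (hconn : PathConn M)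
    (r : M) (hr : ∀ φ : M ≃o M, φ r = r) (φ : M ≃o M) :
    (∀ n : ℕ, φ '' Xset r n = Xset r n) ∧ ∀ n : ℕ, φ '' Yset r n = Yset r n :=
  stmt6_general r hr φ
end

section
/- Let M be a cycle-free partial order into which Alt does not embed. Then every subset of M which, with the induced order, is isomorphic to Alt_ω or to Alt_ω* is contained in a maximal such subset, i.e. a subset A ⊆ M isomorphic to Alt_ω or Alt_ω* that is not properly contained in any subset of M isomorphic to Alt_ω or Alt_ω*. -/
open Set FirstOrder

universe u v

/-- `A ⊆ M`, with the induced order, is a copy of `Alt_ω` or of `Alt_ω*`. -/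
def IsAltOmegaCopy {M : Type*} [PartialOrder M] (A : Set M) : Prop :=
  Nonempty (AltOmega ≃o A) ∨ Nonempty (AltOmegaᵒᵈ ≃o A)

/-!
It suffices that there is no strictly increasing sequence `F₀ ⊊ F₁ ⊊ ⋯` of copies of `Alt_ω` or
`Alt_ω*`: then the copies containing a given one have a maximal element. Index each copy by a ray
`[m, ∞)` of `ℤ` carrying the order of `Alt`. If one copy lies inside another, the smaller is a final
segment of the larger, shifted by an even amount, because the positions of its points form an
injective walk by unit steps that is bounded below, hence goes up. After re-indexing, the rays of
an increasing sequence extend one another and their starting points tend to `-∞`, so together they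
embed all of `Alt`.
-/

def AltLE (i j : ℤ) : Prop := i = j ∨ (Even j ∧ (i = j - 1 ∨ i = j + 1))

theorem AltSub.le_iff {S : Set ℤ} {a b : AltSub S} : a ≤ b ↔ AltLE a.val b.val := Iff.rfl

theorem AltSub.ext {S : Set ℤ} {a b : AltSub S} (h : a.val = b.val) : a = b := by
  cases a; cases b; cases h; rfl

namespace AltLE

theorem iff_emod {i j : ℤ} : AltLE i j ↔ i = j ∨ (j % 2 = 0 ∧ (i = j - 1 ∨ i = j + 1)) := by
  rw [AltLE, Int.even_iff]

theorem antisymm {i j : ℤ} (hij : AltLE i j) (hji : AltLE j i) : i = j := by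
  rw [iff_emod] at hij hji; omega

theorem add_even_iff {i j d : ℤ} (hd : Even d) : AltLE (i + d) (j + d) ↔ AltLE i j := by
  rw [Int.even_iff] at hd; rw [iff_emod, iff_emod]; omega

theorem sub_one_iff {i j : ℤ} : AltLE (j - 1) (i - 1) ↔ AltLE i j := by
  rw [iff_emod, iff_emod]; omega

theorem comparable_succ (i : ℤ) : AltLE i (i + 1) ∨ AltLE (i + 1) i := by
  rw [iff_emod, iff_emod]; omega

theorem eq_or_adjacent_of_comparable {i j : ℤ} (h : AltLE i j ∨ AltLE j i) :
    i = j ∨ j = i + 1 ∨ i = j + 1 := by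
  rw [iff_emod, iff_emod] at h; omega

theorem even_of_succ_iff {i d : ℤ} (h : AltLE i (i + 1) ↔ AltLE (i + d) (i + d + 1)) : Even d := by
  rw [iff_emod, iff_emod] at h; rw [Int.even_iff]; omega

end AltLE

/-- Once such a walk steps down, injectivity forces it to keep stepping down, past any bound. -/
theorem eq_add_of_injective_of_unit_steps {s : ℕ → ℤ} {b : ℤ} (hinj : Function.Injective s)
    (hb : ∀ k, b ≤ s k) (hstep : ∀ k, s (k + 1) = s k + 1 ∨ s (k + 1) + 1 = s k) :
    ∀ k, s k = s 0 + k := by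
  have down_down : ∀ k, s (k + 1) + 1 = s k → s (k + 1 + 1) + 1 = s (k + 1) := by
    intro k hk
    refine (hstep (k + 1)).resolve_left fun hup => ?_
    have := hinj (show s (k + 1 + 1) = s k by omega)
    omega
  have up : ∀ k, s (k + 1) = s k + 1 := by
    intro k
    refine (hstep k).resolve_right fun hdown => ?_
    have descent : ∀ t : ℕ, s (k + t + 1) + 1 = s (k + t) ∧ s (k + t) + t = s k := by
      intro t
      induction t with
      | zero => exact ⟨hdown, by simp⟩
      | succ t ih =>
        rw [← add_assoc]
        exact ⟨down_down _ ih.1, by push_cast; omega⟩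
    have := (descent (s k - b + 1).toNat).2
    have := hb (k + (s k - b + 1).toNat)
    omega
  intro k
  induction k with
  | zero => simp
  | succ k ih => rw [up k, ih]; push_cast; ring

theorem image_shift {α : Type*} (f : ℤ → α) (m d : ℤ) :
    (fun i => f (i + d)) '' Ici (m - d) = f '' Ici m := by
  rw [← image_image f (· + d), image_add_const_Ici, sub_add_cancel]

section AltRay

variable {M : Type*} [PartialOrder M]

/-- Values of `f` below `m` are junk. Copies of `Alt_ω*` are rays too, starting at an odd index. -/
def IsAltRay (f : ℤ → M) (m : ℤ) : Prop :=
  ∀ ⦃i⦄, m ≤ i → ∀ ⦃j⦄, m ≤ j → (f i ≤ f j ↔ AltLE i j)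

namespace IsAltRay

variable {f g : ℤ → M} {m n : ℤ}

theorem injOn (hf : IsAltRay f m) : InjOn f (Ici m) := fun _ hi _ hj hij =>
  AltLE.antisymm ((hf hi hj).1 hij.le) ((hf hj hi).1 hij.ge)

theorem shift (hf : IsAltRay f m) {d : ℤ} (hd : Even d) :
    IsAltRay (fun i => f (i + d)) (m - d) := fun _ hi _ hj => by
  rw [hf (by omega) (by omega), AltLE.add_even_iff hd]

theorem exists_shift (hf : IsAltRay f m) (hg : IsAltRay g n) (h : f '' Ici m ⊆ g '' Ici n) :
    ∃ d, n ≤ m + d ∧ ∀ i, m ≤ i → f i = g (i + d) := by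
  choose s hsn hs using fun k : ℕ => h (mem_image_of_mem f (show m ≤ m + k by omega))
  have hinj : Function.Injective s := fun a b hab => by
    have := hf.injOn (show m ≤ m + a by omega) (show m ≤ m + b by omega) (by rw [← hs, ← hs, hab])
    omega
  have hstep : ∀ k, s (k + 1) = s k + 1 ∨ s (k + 1) + 1 = s k := by
    intro k
    have hcomp : g (s k) ≤ g (s (k + 1)) ∨ g (s (k + 1)) ≤ g (s k) := by
      rw [hs, hs, hf (by omega) (by omega), hf (by omega) (by omega)]
      push_cast
      rw [← add_assoc]
      exact AltLE.comparable_succ _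
    rw [hg (hsn _) (hsn _), hg (hsn _) (hsn _)] at hcomp
    have := hinj.ne (show k ≠ k + 1 by omega)
    have := AltLE.eq_or_adjacent_of_comparable hcomp
    omega
  have hlin := eq_add_of_injective_of_unit_steps hinj hsn hstep
  refine ⟨s 0 - m, by have : n ≤ s 0 := hsn 0; omega, fun i hi => ?_⟩
  have := hs (i - m).toNat
  rw [hlin, show m + ((i - m).toNat : ℤ) = i by omega] at this
  rw [← this]
  congr 1
  omega

theorem even_of_shift (hf : IsAltRay f m) (hg : IsAltRay g n) {d : ℤ} (hd : n ≤ m + d)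
    (h : ∀ i, m ≤ i → f i = g (i + d)) : Even d := by
  refine AltLE.even_of_succ_iff (i := m) ?_
  rw [← hf le_rfl (by omega), h m le_rfl, h (m + 1) (by omega), hg (by omega) (by omega)]
  ring_nf

theorem exists_even_shift (hf : IsAltRay f m) (hg : IsAltRay g n)
    (h : f '' Ici m ⊆ g '' Ici n) : ∃ d, Even d ∧ n ≤ m + d ∧ ∀ i, m ≤ i → f i = g (i + d) :=
  let ⟨d, hd, hfg⟩ := hf.exists_shift hg h
  ⟨d, hf.even_of_shift hg hd hfg, hd, hfg⟩

theorem exists_eqOn_of_image_subset (hf : IsAltRay f m) (hg : IsAltRay g n)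
    (h : f '' Ici m ⊆ g '' Ici n) :
    ∃ g' n', IsAltRay g' n' ∧ g' '' Ici n' = g '' Ici n ∧ n' ≤ m ∧ EqOn f g' (Ici m) := by
  obtain ⟨d, hd, hnd, hfg⟩ := hf.exists_even_shift hg h
  exact ⟨_, n - d, hg.shift hd, image_shift g n d, by omega, fun i hi => hfg i hi⟩

theorem eqOn_of_image_subset (hf : IsAltRay f m) (hg : IsAltRay g n)
    (h : f '' Ici m ⊆ g '' Ici n) {p : ℤ} (hmp : m ≤ p) (hnp : n ≤ p) (hfgp : f p = g p) :
    EqOn f g (Ici m) := by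
  obtain ⟨d, hnd, hfg⟩ := hf.exists_shift hg h
  have hd : p + d = p := hg.injOn (show n ≤ p + d by omega) hnp ((hfg p hmp).symm.trans hfgp)
  intro i hi
  rw [hfg i hi, show d = 0 by omega, add_zero]

end IsAltRay

theorem IsAltOmegaCopy.exists_isAltRay {A : Set M} (hA : IsAltOmegaCopy A) :
    ∃ f m, IsAltRay f m ∧ A = f '' Ici m := by
  have hclip : ∀ a : AltOmega, (⟨max a.val 0, le_max_right a.val 0⟩ : AltOmega) = a :=
    fun a => AltSub.ext (max_eq_left a.mem)
  rcases hA with ⟨⟨e⟩⟩ | ⟨⟨e⟩⟩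
  · refine ⟨fun i => e ⟨max i 0, le_max_right i 0⟩, 0, fun i hi j hj => ?_, ?_⟩
    · simp only [Subtype.coe_le_coe, e.le_iff_le, AltSub.le_iff, max_eq_left hi, max_eq_left hj]
    · ext x
      refine ⟨fun hx => ⟨(e.symm ⟨x, hx⟩).val, (e.symm ⟨x, hx⟩).mem, ?_⟩, ?_⟩
      · simp only [hclip, OrderIso.apply_symm_apply]
      · rintro ⟨i, -, rfl⟩
        exact Subtype.mem _
  · refine ⟨fun i => e (OrderDual.toDual ⟨max (i - 1) 0, le_max_right (i - 1) 0⟩), 1,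
      fun i hi j hj => ?_, ?_⟩
    · simp only [Subtype.coe_le_coe, e.le_iff_le, OrderDual.toDual_le_toDual, AltSub.le_iff,
        max_eq_left (show (0 : ℤ) ≤ i - 1 by omega), max_eq_left (show (0 : ℤ) ≤ j - 1 by omega),
        AltLE.sub_one_iff]
    · ext x
      refine ⟨fun hx => ⟨(OrderDual.ofDual (e.symm ⟨x, hx⟩)).val + 1,
        by have := (OrderDual.ofDual (e.symm ⟨x, hx⟩)).mem; simp_all, ?_⟩, ?_⟩
      · simp only [add_sub_cancel_right, hclip, OrderDual.toDual_ofDual, OrderIso.apply_symm_apply]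
      · rintro ⟨i, -, rfl⟩
        exact Subtype.mem _

theorem embedsIn_altZ_of_rays {f : ℕ → ℤ → M} {m : ℕ → ℤ} (hf : ∀ n, IsAltRay (f n) (m n))
    (hcompat : ∀ n n', n ≤ n' → EqOn (f n) (f n') (Ici (m n))) (hm : Antitone m)
    (hunbdd : ∀ z, ∃ n, m n ≤ z) : EmbedsIn AltZ M := by
  choose N hN using hunbdd
  refine ⟨OrderEmbedding.ofMapLEIff (fun a : AltZ => f (N a.val) a.val) fun a b => ?_⟩
  set K := max (N a.val) (N b.val)
  have ha : m K ≤ a.val := (hm (le_max_left _ _)).trans (hN a.val)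
  have hb : m K ≤ b.val := (hm (le_max_right _ _)).trans (hN b.val)
  rw [hcompat _ _ (le_max_left _ _) (hN a.val), hcompat _ _ (le_max_right _ _) (hN b.val),
    hf K ha hb, AltSub.le_iff]

theorem embedsIn_altZ_of_strictMono {F : ℕ → Set M} (hF : ∀ n, IsAltOmegaCopy (F n))
    (hmono : StrictMono F) : EmbedsIn AltZ M := by
  choose f m hf hfF using fun n => (hF n).exists_isAltRay
  -- Re-index every ray to extend the ray of `F 0`; rigidity then makes them pairwise compatible.
  have hnorm : ∀ n, ∃ g k, IsAltRay g k ∧ F n = g '' Ici k ∧ k ≤ m 0 ∧ EqOn (f 0) g (Ici (m 0)) :=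
    fun n => by
      obtain ⟨g, k, hg, himg, hk, heq⟩ := (hf 0).exists_eqOn_of_image_subset (hf n)
        (by rw [← hfF, ← hfF]; exact hmono.monotone (Nat.zero_le n))
      exact ⟨g, k, hg, (hfF n).trans himg.symm, hk, heq⟩
  choose g k hg hgF hk hfg using hnorm
  have hcompat : ∀ n n', n ≤ n' → EqOn (g n) (g n') (Ici (k n)) := fun n n' h =>
    (hg n).eqOn_of_image_subset (hg n') (by rw [← hgF, ← hgF]; exact hmono.monotone h)
      (hk n) (hk n') ((hfg n self_mem_Ici).symm.trans (hfg n' self_mem_Ici))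
  have hanti : StrictAnti k := strictAnti_nat_of_succ_lt fun n => by
    by_contra! hle
    refine (hmono (lt_add_one n)).not_subset ?_
    rw [hgF, hgF, (hcompat n (n + 1) n.le_succ).image_eq]
    exact image_mono (Ici_subset_Ici.2 hle)
  have hdrop : ∀ n : ℕ, k n + n ≤ k 0 := by
    intro n
    induction n with
    | zero => simp
    | succ n ih => have := hanti (lt_add_one n); push_cast; omega
  exact embedsIn_altZ_of_rays hg hcompat hanti.antitone
    fun z => ⟨(k 0 - z).toNat, by have := hdrop (k 0 - z).toNat; omega⟩

theorem wellFoundedOn_isAltOmegaCopy (hAlt : ¬EmbedsIn AltZ M) :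
    {B : Set M | IsAltOmegaCopy B}.WellFoundedOn (· > ·) := by
  rw [wellFoundedOn_iff_no_descending_seq]
  exact fun F hF => hAlt (embedsIn_altZ_of_strictMono hF fun a b hab => F.map_rel_iff.2 hab)

end AltRay

theorem stmt14_general {M : Type*} [PartialOrder M]
    (hAlt : ¬EmbedsIn AltZ M) :
    ∀ A : Set M, IsAltOmegaCopy A →
      ∃ B : Set M, IsAltOmegaCopy B ∧ A ⊆ B ∧
        ∀ C : Set M, IsAltOmegaCopy C → B ⊆ C → B = C := by
  intro A hA
  obtain ⟨B, ⟨hB, hAB⟩, hmax⟩ := ((wellFoundedOn_isAltOmegaCopy hAlt).subset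
    fun _ h => h.1).exists_maximal (s := {B | IsAltOmegaCopy B ∧ A ⊆ B}) ⟨A, hA, subset_rfl⟩
  exact ⟨B, hB, hAB, fun C hC hBC => hBC.antisymm (hmax ⟨hC, hAB.trans hBC⟩ hBC)⟩

/-- in a CFPO into which `Alt` does not embed, every copy of
`Alt_ω` or `Alt_ω*` is contained in a maximal such copy. -/
theorem stmt14 {M : Type*} [PartialOrder M] (hM : IsCFPO M)
    (hAlt : ¬EmbedsIn AltZ M) :
    ∀ A : Set M, IsAltOmegaCopy A →
      ∃ B : Set M, IsAltOmegaCopy B ∧ A ⊆ B ∧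
        ∀ C : Set M, IsAltOmegaCopy C → B ⊆ C → B = C :=
  stmt14_general hAlt
end

section
/- For every tree T, the group of order-automorphisms of T is not isomorphic, as an abstract group, to the group of order-automorphisms of Alt. -/
open Set FirstOrder

universe u v

open scoped Pointwise
open MulAction

/-!
`Aut(Alt)` is the infinite dihedral group, generated by the reflections `a : p ↦ -p` and
`b : p ↦ 2 - p`; the centraliser of `a` is `{1, a}` and that of every nontrivial power of the
translation `t = a * b` is `⟨t⟩`. Suppose `a`, `b` were order-automorphisms of a tree with these
group-theoretic properties. If an automorphism `g` leaves invariant an upward closed set `D` such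
that every point below `D` but outside `D` lies below all of `D`, then `g` restricted to `D`
(and the identity elsewhere) is again an automorphism, commuting with `g`; the centraliser
conditions then force the support of `a`, `b` or `t ^ n` to lie entirely inside or entirely outside
`D`.

Take the least such set `C` invariant under `a` and `b` and containing their supports, and split it
into components (two points are linked if they have a common lower bound in `C`). Minimality rules
out a single component, and then also a component invariant under `t`; so the components along a
`t`-orbit are pairwise distinct. The support of `a` lies in two of them, and a conjugate of `a` by a
suitable power of `t` has support disjoint from that of `a`, so the two commute: impossible in the
infinite dihedral group.
-/

structure IsDihedralPair {G : Type*} [Group G] (a b : G) : Prop where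
  mul_self_left : a * a = 1
  mul_self_right : b * b = 1
  zpow_eq_one : ∀ k : ℤ, (a * b) ^ k = 1 → k = 0
  eq_of_commute_left : ∀ g, Commute g a → g = 1 ∨ g = a
  eq_of_commute_right : ∀ g, Commute g b → g = 1 ∨ g = b
  exists_zpow_of_commute : ∀ n : ℤ, n ≠ 0 → ∀ g, Commute g ((a * b) ^ n) → ∃ j : ℤ, g = (a * b) ^ j

namespace IsDihedralPair

variable {G H : Type*} [Group G] [Group H] {a b : G}

lemma map (h : IsDihedralPair a b) (e : G ≃* H) : IsDihedralPair (e a) (e b) where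
  mul_self_left := by rw [← map_mul, h.mul_self_left, map_one]
  mul_self_right := by rw [← map_mul, h.mul_self_right, map_one]
  zpow_eq_one k hk := h.zpow_eq_one k (e.injective (by rwa [map_zpow, map_mul, map_one]))
  eq_of_commute_left g hg := by
    have := h.eq_of_commute_left _ (by simpa using hg.map e.symm.toMonoidHom)
    simpa [e.symm_apply_eq] using this
  eq_of_commute_right g hg := by
    have := h.eq_of_commute_right _ (by simpa using hg.map e.symm.toMonoidHom)
    simpa [e.symm_apply_eq] using this
  exists_zpow_of_commute n hn g hg := by
    obtain ⟨j, hj⟩ := h.exists_zpow_of_commute n hn _ (by simpa using hg.map e.symm.toMonoidHom)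
    exact ⟨j, by simpa [e.symm_apply_eq] using hj⟩

lemma inv_left (h : IsDihedralPair a b) : a⁻¹ = a := inv_eq_of_mul_eq_one_right h.mul_self_left

lemma inv_right (h : IsDihedralPair a b) : b⁻¹ = b := inv_eq_of_mul_eq_one_right h.mul_self_right

lemma left_ne_one (h : IsDihedralPair a b) : a ≠ 1 := by
  rintro rfl
  have := h.zpow_eq_one 2 (by rw [one_mul, zpow_two, h.mul_self_right])
  omega

lemma conj_left (h : IsDihedralPair a b) : a * (a * b) * a⁻¹ = (a * b)⁻¹ := by
  rw [h.inv_left, mul_inv_rev, h.inv_left, h.inv_right, ← mul_assoc, h.mul_self_left, one_mul]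

lemma conj_right (h : IsDihedralPair a b) : b * (a * b) * b⁻¹ = (a * b)⁻¹ := by
  rw [h.inv_right, mul_inv_rev, h.inv_left, h.inv_right]
  simp only [mul_assoc, h.mul_self_right, mul_one]

lemma mul_zpow (h : IsDihedralPair a b) (k : ℤ) : a * (a * b) ^ k = (a * b) ^ (-k) * a := by
  have := map_zpow (MulAut.conj a) (a * b) k
  rw [MulAut.conj_apply, MulAut.conj_apply, h.conj_left, inv_zpow, ← zpow_neg] at this
  rw [← this, mul_assoc, inv_mul_cancel, mul_one]

lemma mul_zpow_mul (h : IsDihedralPair a b) (k : ℤ) : a * (a * b) ^ k * a = (a * b) ^ (-k) := by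
  rw [h.mul_zpow, mul_assoc, h.mul_self_left, mul_one]

lemma not_commute (h : IsDihedralPair a b) : ¬Commute a b := fun hc => by
  have := h.zpow_eq_one 2 (by
    rw [zpow_two, mul_assoc, ← mul_assoc b, ← hc.eq, mul_assoc, h.mul_self_right, mul_one,
      h.mul_self_left])
  omega

lemma not_commute_mul (h : IsDihedralPair a b) : ¬Commute a (a * b) := fun hc =>
  h.not_commute (by simpa using (Commute.refl a).inv_right.mul_right hc)

lemma not_commute_conj (h : IsDihedralPair a b) {n : ℤ} (hn : n ≠ 0) :
    ¬Commute a ((a * b) ^ n * a * ((a * b) ^ n)⁻¹) := fun hc => by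
  have key : (a * b) ^ (-n + -n) = (a * b) ^ (n + n) := calc
    _ = a * (a * b) ^ n * a * (a * b) ^ (-n) := by rw [h.mul_zpow_mul, zpow_add]
    _ = (a * b) ^ n * a * (a * b) ^ (-n) * a := by simpa [mul_assoc, zpow_neg] using hc.eq
    _ = (a * b) ^ (n + n) := by
      rw [mul_assoc _ _ a, mul_assoc, ← mul_assoc a, h.mul_zpow_mul, neg_neg, ← zpow_add]
  have := h.zpow_eq_one (n + n - (-n + -n)) (by rw [zpow_sub, key, mul_inv_cancel])
  omega

end IsDihedralPair

lemma smul_notMem_fixedBy_of_conj_eq_inv {G α : Type*} [Group G] [MulAction G α] {g t : G}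
    (h : g * t * g⁻¹ = t⁻¹) {x : α} (hx : x ∉ fixedBy α t) : g • x ∉ fixedBy α t := by
  rwa [← fixedBy_inv, ← h, ← smul_fixedBy, Set.smul_mem_smul_set_iff]

lemma notMem_fixedBy_or_of_notMem_fixedBy_mul {G α : Type*} [Group G] [MulAction G α]
    {g h : G} {x : α} (hx : x ∉ fixedBy α (g * h)) : x ∉ fixedBy α g ∨ x ∉ fixedBy α h := by
  by_contra! hgh
  exact hx (fixedBy_mul α g h hgh)

lemma exists_notMem_fixedBy {G : Type*} (α : Type*) [Group G] [MulAction G α]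
    [FaithfulSMul G α] {g : G} (hg : g ≠ 1) : ∃ x, x ∉ fixedBy α g := by
  by_contra! h
  exact hg (eq_of_smul_eq_smul fun x => by rw [one_smul]; exact h x)

lemma zpow_smul_mem {G α : Type*} [Group G] [MulAction G α] {C : Set α} {g : G}
    (hg : g ∈ stabilizer G C) {x : α} (hx : x ∈ C) (k : ℤ) : g ^ k • x ∈ C :=
  (mem_stabilizer_set.1 (zpow_mem hg k) x).2 hx

lemma Subgroup.commute_of_subset_fixedBy {α : Type*} {H : Subgroup (Equiv.Perm α)} {g h : H}
    {D : Set α} (hg : D ⊆ fixedBy α g) (hh : Dᶜ ⊆ fixedBy α h) : Commute g h :=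
  Subtype.ext (Equiv.Perm.Disjoint.commute fun x =>
    (em (x ∈ D)).imp (fun hx => hg hx) (fun hx => hh hx))

lemma orderAutGroup.smul_le_smul_iff {M : Type*} [PartialOrder M] (g : orderAutGroup M)
    {x y : M} : g • x ≤ g • y ↔ x ≤ y :=
  g.2.1 x y

lemma orderAutGroup.smul_lt_smul_iff {M : Type*} [PartialOrder M] (g : orderAutGroup M)
    {x y : M} : g • x < g • y ↔ x < y := by
  simp only [lt_iff_le_not_ge, orderAutGroup.smul_le_smul_iff]

namespace AltZ

abbrev alt (p : ℤ) : AltZ := ⟨p, mem_univ p⟩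

lemma alt_le_alt {p q : ℤ} : alt p ≤ alt q ↔ p = q ∨ Even q ∧ (p = q - 1 ∨ p = q + 1) :=
  Iff.rfl

lemma alt_injective : Function.Injective alt := fun _ _ h => congrArg AltSub.val h

lemma even_of_alt_lt {p q : ℤ} (h : alt p < alt q) : Even q := by
  rcases alt_le_alt.1 h.le with rfl | ⟨hq, -⟩
  · exact absurd rfl h.ne
  · exact hq

lemma alt_comparable_iff {p q : ℤ} (hpq : p ≠ q) :
    (alt p ≤ alt q ∨ alt q ≤ alt p) ↔ (p = q + 1 ∨ q = p + 1) := by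
  simp only [alt_le_alt]
  constructor
  · rintro ((h | ⟨-, h⟩) | (h | ⟨-, h⟩)) <;> omega
  · intro h
    rcases Int.even_or_odd q with hq | ⟨r, hr⟩
    · exact Or.inl (Or.inr ⟨hq, by omega⟩)
    · exact Or.inr (Or.inr ⟨(Int.even_or_odd p).resolve_right fun ⟨s, hs⟩ => by omega, by omega⟩)

lemma orderAutGroup_ext {g h : orderAutGroup AltZ} (H : ∀ p, g • alt p = h • alt p) : g = h :=
  eq_of_smul_eq_smul fun x : AltZ => H x.val

/-- An automorphism maps the neighbours `a_p`, `a_{p+1}` to neighbours and is injective, so its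
increments are a constant `±1`; and `a_0`, a peak, goes to a peak. -/
lemma exists_affine (g : orderAutGroup AltZ) :
    ∃ u d : ℤ, Even u ∧ (d = 1 ∨ d = -1) ∧ ∀ p, g • alt p = alt (u + d * p) := by
  set f : ℤ → ℤ := fun p => (g • alt p).val
  have hg : ∀ p, g • alt p = alt (f p) := fun p => rfl
  have hinj : ∀ p q, f p = f q → p = q := fun p q h =>
    alt_injective (smul_left_cancel g (by rw [hg, hg, h]))
  have hadj : ∀ p, f (p + 1) = f p + 1 ∨ f p = f (p + 1) + 1 := by
    intro p
    have hne : f (p + 1) ≠ f p := fun h => by have := hinj _ _ h; omega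
    rw [← alt_comparable_iff hne, ← hg, ← hg, orderAutGroup.smul_le_smul_iff,
      orderAutGroup.smul_le_smul_iff, alt_comparable_iff (by omega)]
    omega
  have hincr : Function.Periodic (fun p => f (p + 1) - f p) 1 := fun p => by
    have := hadj p
    have := hadj (p + 1)
    have := hinj (p + 1 + 1) p
    simp only
    omega
  have hlin : Function.Periodic (fun p => f p - (f 1 - f 0) * p) 1 := fun p => by
    have := hincr.int_mul_eq p
    simp only [Int.cast_id, mul_one, zero_add] at this ⊢
    linarith
  refine ⟨f 0, f 1 - f 0, even_of_alt_lt (p := f (-1)) ?_, ?_, fun p => ?_⟩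
  · rw [← hg, ← hg, orderAutGroup.smul_lt_smul_iff]
    exact lt_of_le_of_ne (alt_le_alt.2 (Or.inr ⟨Even.zero, Or.inl rfl⟩)) (by simp)
  · have := hadj 0
    rw [zero_add] at this
    omega
  · have := hlin.int_mul_eq p
    simp only [Int.cast_id, mul_one, mul_zero, sub_zero] at this
    rw [hg]
    congr 1
    linarith

def reflection (c : ℤ) (hc : Even c) : orderAutGroup AltZ :=
  ⟨⟨fun x => alt (c - x.val), fun x => alt (c - x.val), fun x => by simp, fun x => by simp⟩,
    fun x y => by
      change alt _ ≤ alt _ ↔ alt x.val ≤ alt y.val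
      simp only [alt_le_alt, Int.even_sub, hc, true_iff]
      constructor <;> rintro (h | ⟨he, h⟩) <;>
        first | exact Or.inl (by omega) | exact Or.inr ⟨he, by omega⟩,
    fun _ => rfl⟩

lemma reflection_smul {c : ℤ} (hc : Even c) (p : ℤ) : reflection c hc • alt p = alt (c - p) :=
  rfl

lemma zpow_reflection_mul_smul (k p : ℤ) :
    (reflection 0 Even.zero * reflection 2 even_two) ^ k • alt p = alt (p - 2 * k) := by
  have hstep : ∀ p, (reflection 0 Even.zero * reflection 2 even_two) • alt p = alt (p - 2) :=
    fun p => by rw [mul_smul, reflection_smul, reflection_smul]; ring_nf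
  have hstep_inv : ∀ p,
      (reflection 0 Even.zero * reflection 2 even_two)⁻¹ • alt p = alt (p + 2) :=
    fun p => by rw [inv_smul_eq_iff, hstep, add_sub_cancel_right]
  induction k using Int.induction_on generalizing p with
  | zero => simp
  | succ i ih => rw [zpow_add_one, mul_smul, hstep, ih]; ring_nf
  | pred i ih => rw [zpow_sub_one, mul_smul, hstep_inv, ih]; ring_nf

lemma eq_of_commute_reflection {c : ℤ} (hc : Even c) {g : orderAutGroup AltZ}
    (hg : Commute g (reflection c hc)) : g = 1 ∨ g = reflection c hc := by
  obtain ⟨u, d, -, hd, hgp⟩ := exists_affine g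
  have h0 := congrArg (· • alt 0) hg.eq
  simp only [mul_smul, reflection_smul, hgp] at h0
  replace h0 := alt_injective h0
  rcases hd with rfl | rfl
  · exact Or.inl (orderAutGroup_ext fun p => by rw [hgp, one_smul]; congr 1; linarith)
  · exact Or.inr (orderAutGroup_ext fun p => by rw [hgp, reflection_smul]; congr 1; linarith)

lemma isDihedralPair_reflection :
    IsDihedralPair (reflection 0 Even.zero) (reflection 2 even_two) where
  mul_self_left := orderAutGroup_ext fun p => by
    rw [mul_smul, reflection_smul, reflection_smul, one_smul, sub_sub_cancel]
  mul_self_right := orderAutGroup_ext fun p => by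
    rw [mul_smul, reflection_smul, reflection_smul, one_smul, sub_sub_cancel]
  zpow_eq_one k hk := by
    have := congrArg (· • alt 0) hk
    simp only [zpow_reflection_mul_smul, one_smul] at this
    have := alt_injective this
    omega
  eq_of_commute_left _ := eq_of_commute_reflection _
  eq_of_commute_right _ := eq_of_commute_reflection _
  exists_zpow_of_commute n hn g hg := by
    obtain ⟨u, d, ⟨w, rfl⟩, hd, hgp⟩ := exists_affine g
    have h0 := congrArg (· • alt 0) hg.eq
    simp only [mul_smul, zpow_reflection_mul_smul, hgp] at h0
    replace h0 := alt_injective h0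
    refine ⟨-w, orderAutGroup_ext fun p => ?_⟩
    rw [hgp, zpow_reflection_mul_smul]
    rcases hd with rfl | rfl
    · congr 1; ring
    · exfalso; apply hn; linarith

end AltZ

section Restriction

variable {T : Type*} [PartialOrder T]

structure IsDetachable (D : Set T) : Prop where
  isUpperSet : IsUpperSet D
  le_of_le_of_notMem : ∀ ⦃x y z⦄, y ∈ D → z ∈ D → x ≤ y → x ∉ D → x ≤ z

lemma IsDetachable.sInter {S : Set (Set T)} (hS : ∀ D ∈ S, IsDetachable D) :
    IsDetachable (⋂₀ S) where
  isUpperSet := isUpperSet_sInter fun D hD => (hS D hD).isUpperSet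
  le_of_le_of_notMem x y z hy hz hxy hx := by
    obtain ⟨D, hD, hxD⟩ := not_forall₂.1 hx
    exact (hS D hD).le_of_le_of_notMem (hy D hD) (hz D hD) hxy hxD

lemma IsTree.isDetachable_Ioi (hT : IsTree T) (q : T) : IsDetachable (Ioi q) where
  isUpperSet := isUpperSet_Ioi q
  le_of_le_of_notMem x y z hy hz hxy hx := by
    rcases hT.2 y x q hxy hy.le with h | h
    · exact h.trans hz.le
    · exact eq_of_le_of_not_lt h hx ▸ hz.le

lemma mem_stabilizer_Ioi {g : orderAutGroup T} {q : T} (hq : g • q = q) :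
    g ∈ stabilizer (orderAutGroup T) (Ioi q) :=
  mem_stabilizer_set.2 fun z => by
    simpa only [mem_Ioi, hq] using orderAutGroup.smul_lt_smul_iff g (x := q) (y := z)

lemma IsDetachable.exists_restrict {g : orderAutGroup T} {D : Set T} (hD : IsDetachable D)
    (hg : g ∈ stabilizer (orderAutGroup T) D) :
    ∃ r : orderAutGroup T, Commute r g ∧ (∀ x ∈ D, r • x = g • x) ∧ ∀ x ∉ D, r • x = x := by
  classical
  rw [mem_stabilizer_set] at hg
  let σ : Equiv.Perm T := Equiv.Perm.ofSubtype ((g : Equiv.Perm T).subtypePerm hg)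
  have hin : ∀ x ∈ D, σ x = g • x := fun x hx => Equiv.Perm.ofSubtype_apply_of_mem _ hx
  have hout : ∀ x ∉ D, σ x = x := fun x hx => Equiv.Perm.ofSubtype_apply_of_not_mem _ hx
  have hle : ∀ x y, σ x ≤ σ y ↔ x ≤ y := by
    intro x y
    by_cases hx : x ∈ D <;> by_cases hy : y ∈ D
    · rw [hin x hx, hin y hy, orderAutGroup.smul_le_smul_iff]
    · rw [hin x hx, hout y hy]
      exact iff_of_false (fun h => hy (hD.isUpperSet h ((hg x).2 hx)))
        (fun h => hy (hD.isUpperSet h hx))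
    · rw [hout x hx, hin y hy]
      exact ⟨fun h => hD.le_of_le_of_notMem ((hg y).2 hy) hy h hx,
        fun h => hD.le_of_le_of_notMem hy ((hg y).2 hy) h hx⟩
    · rw [hout x hx, hout y hy]
  refine ⟨⟨σ, hle, fun _ => rfl⟩, Subtype.ext (Equiv.ext fun x => ?_), hin, hout⟩
  change σ (g • x) = g • σ x
  by_cases hx : x ∈ D
  · rw [hin x hx, hin _ ((hg x).2 hx)]
  · rw [hout x hx, hout _ (fun h => hx ((hg x).1 h))]

lemma IsDetachable.subset_fixedBy_or {g : orderAutGroup T} {D : Set T} (hD : IsDetachable D)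
    (hg : g ∈ stabilizer (orderAutGroup T) D) (hcent : ∀ r, Commute r g → r = 1 ∨ r = g) :
    D ⊆ fixedBy T g ∨ Dᶜ ⊆ fixedBy T g := by
  obtain ⟨r, hr, hin, hout⟩ := hD.exists_restrict hg
  rcases hcent r hr with rfl | rfl
  · exact Or.inl fun x hx => ((hin x hx).symm.trans (one_smul _ x))
  · exact Or.inr fun x hx => hout x hx

/-- The restriction of `t ^ n` to `D` is some `t ^ j`; it agrees with `t ^ n` on `D` and is
trivial off `D`, so `t ^ (j * (n - j)) = 1`. -/
lemma IsDetachable.subset_fixedBy_zpow_or {t : orderAutGroup T} {n : ℤ} {D : Set T}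
    (hD : IsDetachable D) (hn : t ^ n ∈ stabilizer (orderAutGroup T) D)
    (hpow : ∀ k : ℤ, t ^ k = 1 → k = 0)
    (hcent : ∀ r, Commute r (t ^ n) → ∃ j : ℤ, r = t ^ j) :
    D ⊆ fixedBy T (t ^ n) ∨ Dᶜ ⊆ fixedBy T (t ^ n) := by
  obtain ⟨r, hr, hin, hout⟩ := hD.exists_restrict hn
  obtain ⟨j, rfl⟩ := hcent r hr
  have hj : j * (n - j) = 0 := hpow _ <| eq_of_smul_eq_smul fun x => by
    rw [one_smul]
    by_cases hx : x ∈ D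
    · have : t ^ (n - j) • x = x := by
        rw [sub_eq_neg_add, zpow_add, mul_smul, ← hin x hx, ← mul_smul, ← zpow_add,
          neg_add_cancel, zpow_zero, one_smul]
      rw [mul_comm, zpow_mul]
      exact mem_fixedBy_zpow this j
    · rw [zpow_mul]
      exact mem_fixedBy_zpow (hout x hx) (n - j)
  rcases mul_eq_zero.1 hj with rfl | hj
  · exact Or.inl fun x hx => by rw [mem_fixedBy, ← hin x hx, zpow_zero, one_smul]
  · obtain rfl : j = n := by omega
    exact Or.inr fun x hx => hout x hx

end Restriction

section Components

variable {T : Type*} [PartialOrder T]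

def Linked (C : Set T) (x y : T) : Prop := x ∈ C ∧ y ∈ C ∧ ∃ w ∈ C, w ≤ x ∧ w ≤ y

namespace Linked

variable {C : Set T} {x y z : T}

lemma refl (hx : x ∈ C) : Linked C x x := ⟨hx, hx, x, hx, le_rfl, le_rfl⟩

lemma symm (h : Linked C x y) : Linked C y x :=
  let ⟨hx, hy, w, hw, hwx, hwy⟩ := h
  ⟨hy, hx, w, hw, hwy, hwx⟩

lemma trans (hT : IsTree T) (h₁ : Linked C x y) (h₂ : Linked C y z) : Linked C x z := by
  obtain ⟨hx, hy, w, hw, hwx, hwy⟩ := h₁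
  obtain ⟨-, hz, w', hw', hwy', hwz⟩ := h₂
  rcases hT.2 y w w' hwy hwy' with h | h
  · exact ⟨hx, hz, w, hw, hwx, h.trans hwz⟩
  · exact ⟨hx, hz, w', hw', h.trans hwx, hwz⟩

lemma smul {g : orderAutGroup T} (hg : g ∈ stabilizer (orderAutGroup T) C) (h : Linked C x y) :
    Linked C (g • x) (g • y) := by
  obtain ⟨hx, hy, w, hw, hwx, hwy⟩ := h
  rw [mem_stabilizer_set] at hg
  exact ⟨(hg x).2 hx, (hg y).2 hy, g • w, (hg w).2 hw,
    (orderAutGroup.smul_le_smul_iff g).2 hwx, (orderAutGroup.smul_le_smul_iff g).2 hwy⟩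

end Linked

def components (C X : Set T) : Set T := {z | ∃ x ∈ X, Linked C x z}

lemma mem_components_singleton {C : Set T} {x z : T} : z ∈ components C {x} ↔ Linked C x z := by
  simp [components]

lemma IsTree.isDetachable_components (hT : IsTree T) {C : Set T} (hC : IsDetachable C)
    (X : Set T) : IsDetachable (components C X) where
  isUpperSet y z hyz := fun ⟨x, hx, hxy, hy, w, hw, hwx, hwy⟩ =>
    ⟨x, hx, hxy, hC.isUpperSet hyz hy, w, hw, hwx, hwy.trans hyz⟩
  le_of_le_of_notMem x y z := fun ⟨y₀, hy₀, hy⟩ ⟨_, _, hz⟩ hxy hx => by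
    refine hC.le_of_le_of_notMem hy.2.1 hz.2.1 hxy fun hxC => hx ⟨y₀, hy₀, ?_⟩
    exact hy.trans hT ⟨hy.2.1, hxC, x, hxC, hxy, le_rfl⟩

lemma IsTree.mem_stabilizer_components (hT : IsTree T) {C X : Set T} {g : orderAutGroup T}
    (hg : g ∈ stabilizer (orderAutGroup T) C)
    (hX : ∀ x ∈ X, g • x ∈ components C X ∧ g⁻¹ • x ∈ components C X) :
    g ∈ stabilizer (orderAutGroup T) (components C X) := by
  refine mem_stabilizer_set.2 fun z => ⟨fun ⟨x, hx, hxz⟩ => ?_, fun ⟨x, hx, hxz⟩ => ?_⟩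
  · obtain ⟨x', hx', h'⟩ := (hX x hx).2
    exact ⟨x', hx', h'.trans hT (by simpa using hxz.smul (inv_mem hg))⟩
  · obtain ⟨x', hx', h'⟩ := (hX x hx).1
    exact ⟨x', hx', h'.trans hT (hxz.smul hg)⟩

lemma IsTree.mem_stabilizer_components_singleton (hT : IsTree T) {C : Set T} {g : orderAutGroup T}
    (hg : g ∈ stabilizer (orderAutGroup T) C) {x : T} (hx : Linked C x (g • x)) :
    g ∈ stabilizer (orderAutGroup T) (components C {x}) :=
  hT.mem_stabilizer_components hg fun _ hy => by
    obtain rfl := mem_singleton_iff.1 hy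
    exact ⟨⟨_, rfl, hx⟩, ⟨_, rfl, by simpa using (hx.smul (inv_mem hg)).symm⟩⟩

end Components

section Envelope

variable {T : Type*} [PartialOrder T] {a b : orderAutGroup T}

lemma IsTree.smul_eq_self_of_le_of_le (hT : IsTree T) {g : orderAutGroup T} (hg : g * g = 1)
    {w y : T} (hwy : w ≤ y) (hwg : w ≤ g • y) : g • w = w := by
  have hgg : ∀ z : T, g • g • z = z := fun z => by rw [← mul_smul, hg, one_smul]
  have hgw : g • w ≤ y := by simpa [hgg] using (orderAutGroup.smul_le_smul_iff g).2 hwg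
  rcases hT.2 y w (g • w) hwy hgw with h | h
  · exact le_antisymm (by simpa [hgg] using (orderAutGroup.smul_le_smul_iff g).2 h) h
  · exact le_antisymm h (by simpa [hgg] using (orderAutGroup.smul_le_smul_iff g).2 h)

structure IsEnvelope (a b : orderAutGroup T) (D : Set T) : Prop where
  isDetachable : IsDetachable D
  left_mem_stabilizer : a ∈ stabilizer (orderAutGroup T) D
  right_mem_stabilizer : b ∈ stabilizer (orderAutGroup T) D
  movedBy_left_subset : (fixedBy T a)ᶜ ⊆ D
  movedBy_right_subset : (fixedBy T b)ᶜ ⊆ D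

def envelope (a b : orderAutGroup T) : Set T := ⋂₀ {D | IsEnvelope a b D}

lemma isEnvelope_envelope : IsEnvelope a b (envelope a b) := by
  have hstab : ∀ g : orderAutGroup T, (∀ D, IsEnvelope a b D → g ∈ stabilizer _ D) →
      g ∈ stabilizer (orderAutGroup T) (envelope a b) := fun g hg =>
    mem_stabilizer_set.2 fun z => forall₂_congr fun D hD => mem_stabilizer_set.1 (hg D hD) z
  exact ⟨IsDetachable.sInter fun D hD => hD.isDetachable,
    hstab a fun D hD => hD.left_mem_stabilizer, hstab b fun D hD => hD.right_mem_stabilizer,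
    subset_sInter fun D hD => hD.movedBy_left_subset,
    subset_sInter fun D hD => hD.movedBy_right_subset⟩

lemma envelope_subset {D : Set T} (hD : IsEnvelope a b D) : envelope a b ⊆ D :=
  sInter_subset_of_mem hD

/-- Automorphisms with disjoint supports commute, while `a` and `b` do not. -/
lemma IsDihedralPair.isEnvelope (hab : IsDihedralPair a b) {D : Set T} (hD : IsDetachable D)
    (ha : a ∈ stabilizer (orderAutGroup T) D) (hb : b ∈ stabilizer (orderAutGroup T) D) {x : T}
    (hx : x ∈ D) (hmoved : x ∉ fixedBy T a ∨ x ∉ fixedBy T b) : IsEnvelope a b D := by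
  rcases hD.subset_fixedBy_or ha hab.eq_of_commute_left with ha' | ha' <;>
    rcases hD.subset_fixedBy_or hb hab.eq_of_commute_right with hb' | hb'
  · exact absurd hmoved (not_or.2 ⟨not_not.2 (ha' hx), not_not.2 (hb' hx)⟩)
  · exact absurd (Subgroup.commute_of_subset_fixedBy ha' hb') hab.not_commute
  · exact absurd (Subgroup.commute_of_subset_fixedBy hb' ha').symm hab.not_commute
  · exact ⟨hD, ha, hb, compl_subset_comm.1 ha', compl_subset_comm.1 hb'⟩

/-- Otherwise two points of the envelope moved by `a` would lie above a common point fixed by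
`a` and `b`, and the cone above it would be a smaller envelope. -/
lemma IsDihedralPair.envelope_not_subset_components (hT : IsTree T) (hab : IsDihedralPair a b)
    (x : T) : ¬envelope a b ⊆ components (envelope a b) {x} := by
  intro hsub
  set C := envelope a b
  have hlinked : ∀ y ∈ C, ∀ z ∈ C, Linked C y z := fun y hy z hz =>
    (mem_components_singleton.1 (hsub hy)).symm.trans hT (mem_components_singleton.1 (hsub hz))
  have hC := isEnvelope_envelope (a := a) (b := b)
  obtain ⟨y, hy⟩ := exists_notMem_fixedBy T hab.left_ne_one
  have hay : a • y ∉ fixedBy T a := by rwa [smul_mem_fixedBy_iff_mem_fixedBy]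
  obtain ⟨-, -, w, hwC, hwy, hway⟩ :=
    hlinked y (hC.movedBy_left_subset hy) _ (hC.movedBy_left_subset hay)
  have haw := hT.smul_eq_self_of_le_of_le hab.mul_self_left hwy hway
  obtain ⟨-, -, q, hqC, hqw, hqbw⟩ :=
    hlinked w hwC _ ((mem_stabilizer_set.1 hC.right_mem_stabilizer w).2 hwC)
  have hbq := hT.smul_eq_self_of_le_of_le hab.mul_self_right hqw hqbw
  have haq := hT.smul_eq_self_of_le_of_le hab.mul_self_left hqw (haw.symm ▸ hqw)
  have hyq : y ∈ Ioi q := lt_of_le_of_ne (hqw.trans hwy) (by rintro rfl; exact hy haq)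
  have hq := hab.isEnvelope (hT.isDetachable_Ioi q) (mem_stabilizer_Ioi haq)
    (mem_stabilizer_Ioi hbq) hyq (Or.inl hy)
  exact lt_irrefl q (envelope_subset hq hqC)

lemma isDetachable_components_envelope (hT : IsTree T) (X : Set T) :
    IsDetachable (components (envelope a b) X) :=
  hT.isDetachable_components isEnvelope_envelope.isDetachable X

lemma mul_mem_stabilizer_envelope : a * b ∈ stabilizer (orderAutGroup T) (envelope a b) :=
  mul_mem isEnvelope_envelope.left_mem_stabilizer isEnvelope_envelope.right_mem_stabilizer

lemma mem_envelope_of_notMem_fixedBy_mul {x : T} (hx : x ∉ fixedBy T (a * b)) :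
    x ∈ envelope a b :=
  (notMem_fixedBy_or_of_notMem_fixedBy_mul hx).elim
    (fun h => isEnvelope_envelope.movedBy_left_subset h)
    (fun h => isEnvelope_envelope.movedBy_right_subset h)

lemma IsDihedralPair.subset_fixedBy_mul_or (hab : IsDihedralPair a b) {D : Set T}
    (hD : IsDetachable D) (ht : a * b ∈ stabilizer (orderAutGroup T) D) :
    D ⊆ fixedBy T (a * b) ∨ Dᶜ ⊆ fixedBy T (a * b) := by
  simpa using hD.subset_fixedBy_zpow_or (n := 1) (by simpa using ht) hab.zpow_eq_one
    (hab.exists_zpow_of_commute 1 one_ne_zero)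

/-- The union of these components is detachable, invariant under `a * b` and meets its support. -/
lemma IsDihedralPair.movedBy_subset_components_orbit (hT : IsTree T) (hab : IsDihedralPair a b)
    {x : T} (hx : x ∉ fixedBy T (a * b)) :
    (fixedBy T (a * b))ᶜ ⊆
      components (envelope a b) (range fun k : ℤ => (a * b) ^ k • x) := by
  have hxC := mem_envelope_of_notMem_fixedBy_mul hx
  have horbit : ∀ k : ℤ, (a * b) ^ k • x ∈
      components (envelope a b) (range fun k : ℤ => (a * b) ^ k • x) := fun k =>
    ⟨_, ⟨k, rfl⟩, .refl (zpow_smul_mem mul_mem_stabilizer_envelope hxC k)⟩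
  have ht := hT.mem_stabilizer_components (X := range fun k : ℤ => (a * b) ^ k • x)
    mul_mem_stabilizer_envelope fun y hy => by
      obtain ⟨k, rfl⟩ := hy
      simp only
      rw [← mul_smul, ← mul_smul, ← zpow_one_add, ← zpow_neg_one, ← zpow_add]
      exact ⟨horbit _, horbit _⟩
  have hxU := horbit 0
  rw [zpow_zero, one_smul] at hxU
  exact compl_subset_comm.1 ((hab.subset_fixedBy_mul_or (isDetachable_components_envelope hT _)
    ht).resolve_left fun h => hx (h hxU))

/-- Its component would contain the support of `a * b`, so (as `a` and `b` invert `a * b`) it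
would be an envelope inside a single component. -/
lemma IsDihedralPair.not_linked_mul_smul (hT : IsTree T) (hab : IsDihedralPair a b) {x : T}
    (hx : x ∉ fixedBy T (a * b)) : ¬Linked (envelope a b) x ((a * b) • x) := by
  intro hl
  have hK := isDetachable_components_envelope (a := a) (b := b) hT {x}
  have hxK : x ∈ components (envelope a b) {x} :=
    mem_components_singleton.2 (.refl (mem_envelope_of_notMem_fixedBy_mul hx))
  have htK := compl_subset_comm.1 <| (hab.subset_fixedBy_mul_or hK
    (hT.mem_stabilizer_components_singleton mul_mem_stabilizer_envelope hl)).resolve_left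
      fun h => hx (h hxK)
  have hax :=
    mem_components_singleton.1 (htK (smul_notMem_fixedBy_of_conj_eq_inv hab.conj_left hx))
  have hbx :=
    mem_components_singleton.1 (htK (smul_notMem_fixedBy_of_conj_eq_inv hab.conj_right hx))
  have hKenv := hab.isEnvelope hK
    (hT.mem_stabilizer_components_singleton isEnvelope_envelope.left_mem_stabilizer hax)
    (hT.mem_stabilizer_components_singleton isEnvelope_envelope.right_mem_stabilizer hbx)
    hxK (notMem_fixedBy_or_of_notMem_fixedBy_mul hx)
  exact hab.envelope_not_subset_components hT x (envelope_subset hKenv)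

/-- If `(a * b) ^ m` fixed the component of `x` pointwise it would fix all components along the
orbit of `x`, hence its whole support; so it moves a point `z` of that component, and `z` and
`(a * b) • z` link `x` to `(a * b) • x`. -/
lemma IsDihedralPair.linked_mul_smul_of_linked_zpow_smul (hT : IsTree T)
    (hab : IsDihedralPair a b) {x : T} (hx : x ∉ fixedBy T (a * b)) {m : ℤ} (hm : m ≠ 0)
    (hl : Linked (envelope a b) x ((a * b) ^ m • x)) :
    Linked (envelope a b) x ((a * b) • x) := by
  have ht := mul_mem_stabilizer_envelope (a := a) (b := b)
  have hK := isDetachable_components_envelope (a := a) (b := b) hT {x}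
  rcases hK.subset_fixedBy_zpow_or (hT.mem_stabilizer_components_singleton (zpow_mem ht m) hl)
    hab.zpow_eq_one (hab.exists_zpow_of_commute m hm) with hfix | hmoved
  · refine absurd (hab.zpow_eq_one m <| eq_of_smul_eq_smul fun z : T => ?_) hm
    rw [one_smul]
    by_contra hz
    obtain ⟨_, ⟨k, rfl⟩, hkz⟩ :=
      hab.movedBy_subset_components_orbit hT hx fun h => hz (mem_fixedBy_zpow h m)
    have hzK : (a * b) ^ (-k) • z ∈ components (envelope a b) {x} :=
      mem_components_singleton.2 <| by
        simpa [smul_smul, ← zpow_add] using hkz.smul (zpow_mem ht (-k))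
    have := hfix hzK
    rw [mem_fixedBy, smul_smul, ← zpow_add, add_comm, zpow_add, mul_smul] at this
    exact hz (smul_left_cancel _ this)
  · obtain ⟨z, hz⟩ := exists_notMem_fixedBy T fun h => hm (hab.zpow_eq_one m h)
    have htz : (a * b) • z ∉ fixedBy T ((a * b) ^ m) := (smul_mem_of_set_mem_fixedBy
      (movedBy_mem_fixedBy_of_commute ((Commute.refl (a * b)).zpow_left m))).2 hz
    have hxz := mem_components_singleton.1 (compl_subset_comm.1 hmoved hz)
    have hxtz := mem_components_singleton.1 (compl_subset_comm.1 hmoved htz)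
    exact hxtz.trans hT (hxz.smul ht).symm

lemma IsDihedralPair.eq_of_linked_zpow_smul (hT : IsTree T) (hab : IsDihedralPair a b) {x : T}
    (hx : x ∉ fixedBy T (a * b)) {p q : ℤ} {z : T}
    (hp : Linked (envelope a b) ((a * b) ^ p • x) z)
    (hq : Linked (envelope a b) ((a * b) ^ q • x) z) : p = q := by
  have hl := (hp.trans hT hq.symm).smul (zpow_mem mul_mem_stabilizer_envelope (-p))
  rw [smul_smul, smul_smul, ← zpow_add, ← zpow_add, neg_add_cancel, zpow_zero, one_smul] at hl
  by_contra hpq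
  exact hab.not_linked_mul_smul hT hx
    (hab.linked_mul_smul_of_linked_zpow_smul hT hx (by omega) hl)

lemma IsDihedralPair.exists_linked_smul_zpow_smul (hT : IsTree T) (hab : IsDihedralPair a b)
    {x : T} (hx : x ∉ fixedBy T (a * b)) :
    ∃ j : ℤ, ∀ k : ℤ, Linked (envelope a b) ((a * b) ^ (j - k) • x) (a • (a * b) ^ k • x) := by
  obtain ⟨_, ⟨j, rfl⟩, hj⟩ := hab.movedBy_subset_components_orbit hT hx
    (smul_notMem_fixedBy_of_conj_eq_inv hab.conj_left hx)
  refine ⟨j, fun k => ?_⟩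
  have := hj.smul (zpow_mem mul_mem_stabilizer_envelope (-k))
  rwa [smul_smul, ← zpow_add, neg_add_eq_sub, smul_smul, ← hab.mul_zpow, ← smul_smul] at this

lemma IsDihedralPair.movedBy_left_subset_components_orbit (hT : IsTree T)
    (hab : IsDihedralPair a b) {x : T} (hx : x ∉ fixedBy T (a * b)) :
    (fixedBy T a)ᶜ ⊆ components (envelope a b) (range fun k : ℤ => (a * b) ^ k • x) := by
  obtain ⟨j, hj⟩ := hab.exists_linked_smul_zpow_smul hT hx
  have haU := hT.mem_stabilizer_components (X := range fun k : ℤ => (a * b) ^ k • x)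
    isEnvelope_envelope.left_mem_stabilizer fun y hy => by
      obtain ⟨k, rfl⟩ := hy
      rw [hab.inv_left, and_self]
      exact ⟨_, ⟨j - k, rfl⟩, hj k⟩
  have htU := hab.movedBy_subset_components_orbit hT hx
  refine compl_subset_comm.1 ((IsDetachable.subset_fixedBy_or
    (isDetachable_components_envelope hT _) haU
    hab.eq_of_commute_left).resolve_left fun h => ?_)
  exact hab.not_commute_mul (Subgroup.commute_of_subset_fixedBy h (compl_subset_comm.1 htU))

lemma IsDihedralPair.movedBy_left_subset_components_pair (hT : IsTree T)
    (hab : IsDihedralPair a b) {y : T} (hy : y ∉ fixedBy T a) :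
    (fixedBy T a)ᶜ ⊆ components (envelope a b) {y, a • y} := by
  have ha := (isEnvelope_envelope (a := a) (b := b)).left_mem_stabilizer
  have hyC : y ∈ envelope a b := isEnvelope_envelope.movedBy_left_subset hy
  have hayC : a • y ∈ envelope a b := (mem_stabilizer_set.1 ha y).2 hyC
  have haP := hT.mem_stabilizer_components ha (X := {y, a • y}) <| by
    rintro z (rfl | rfl) <;> rw [hab.inv_left]
    · exact ⟨⟨_, by simp, .refl hayC⟩, ⟨_, by simp, .refl hayC⟩⟩
    · rw [smul_smul, hab.mul_self_left, one_smul]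
      exact ⟨⟨_, by simp, .refl hyC⟩, ⟨_, by simp, .refl hyC⟩⟩
  exact compl_subset_comm.1 ((IsDetachable.subset_fixedBy_or
    (isDetachable_components_envelope hT _) haP
    hab.eq_of_commute_left).resolve_left fun h => hy (h ⟨y, by simp, .refl hyC⟩))

/-- The support of `a` lies in the union `P` of the components of `y` and `a • y`, which are those
of `t ^ k • x` and `t ^ (j - k) • x` on the orbit of `x` under `t = a * b`. Conjugating by `t ^ n`
shifts these indices by `n`, so for `n ∉ {0, ±(j - 2k)}` the conjugate of `a` has support disjoint
from `P` and commutes with `a`. -/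
theorem IsTree.not_isDihedralPair (hT : IsTree T) (a b : orderAutGroup T) :
    ¬IsDihedralPair a b := by
  intro hab
  set C := envelope a b
  obtain ⟨x, hx⟩ := exists_notMem_fixedBy T (g := a * b) fun h =>
    one_ne_zero (hab.zpow_eq_one 1 (by rwa [zpow_one]))
  obtain ⟨j, hj⟩ := hab.exists_linked_smul_zpow_smul hT hx
  obtain ⟨y, hy⟩ := exists_notMem_fixedBy T hab.left_ne_one
  obtain ⟨_, ⟨k, rfl⟩, hky⟩ := hab.movedBy_left_subset_components_orbit hT hx hy
  have hsuppP := hab.movedBy_left_subset_components_pair hT hy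
  have hPidx : ∀ z ∈ components C {y, a • y},
      Linked C ((a * b) ^ k • x) z ∨ Linked C ((a * b) ^ (j - k) • x) z := by
    rintro z ⟨_, rfl | rfl, hz⟩
    · exact Or.inl (hky.trans hT hz)
    · exact Or.inr (((hj k).trans hT (hky.smul isEnvelope_envelope.left_mem_stabilizer)).trans
        hT hz)
  set n := |j - 2 * k| + 1
  have hn : n ≠ 0 ∧ n ≠ j - 2 * k ∧ n ≠ 2 * k - j := by
    have := le_abs_self (j - 2 * k)
    have := neg_abs_le (j - 2 * k)
    omega
  refine hab.not_commute_conj hn.1 (Subgroup.commute_of_subset_fixedBy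
    (g := (a * b) ^ n * a * ((a * b) ^ n)⁻¹) (fun z hz => ?_) (compl_subset_comm.1 hsuppP)).symm
  by_contra hz'
  rw [← smul_fixedBy, Set.mem_smul_set_iff_inv_smul_mem, ← zpow_neg] at hz'
  have hshift : ∀ i, Linked C ((a * b) ^ i • x) ((a * b) ^ (-n) • z) →
      Linked C ((a * b) ^ (n + i) • x) z := fun i h => by
    simpa [smul_smul, ← zpow_add] using h.smul (zpow_mem mul_mem_stabilizer_envelope n)
  rcases hPidx _ (hsuppP hz') with h₁ | h₁ <;> rcases hPidx z hz with h₂ | h₂ <;>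
    have := hab.eq_of_linked_zpow_smul hT hx (hshift _ h₁) h₂ <;> omega

end Envelope

/-- no tree has automorphism group abstractly isomorphic to
`Aut(Alt)`. -/
theorem stmt16 {T : Type*} [PartialOrder T] (hT : IsTree T) :
    ¬Nonempty ((orderAutGroup T) ≃* (orderAutGroup AltZ)) := by
  rintro ⟨Φ⟩
  exact hT.not_isDihedralPair _ _ (AltZ.isDihedralPair_reflection.map Φ.symm)
end
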